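/- arXiv:1310.2785 — 8 statements merged into one kernel-verified Lean document; each statement's English description precedes it below -/
import Mathlib

section
/- Let λ = (λ₁,...,λₙ) be a non-increasing partition of N equipped with an involution i ↦ i' on {1,...,n} satisfying λ_i = λ_{i'} and i' ∈ {i-1, i, i+1} for all i, and such that λ_i is odd whenever i = i'. Then the number of indices r ∈ {1,...,N} with r + d_r even equals (N + #{i : λ_i odd})/2, where (d₁,...,d_N) is the sequence with λᵢ copies of i. -/
/-!
Write `S i = λ₁ + ⋯ + λᵢ`. The indices `r` with `d_r = i + 1` form the block
`S i < r ≤ S (i + 1)` of length `λᵢ₊₁`, on which the parity of `r + i + 1` alternates; so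
`λᵢ₊₁ / 2` of them are even when `λᵢ₊₁` is even, and `(λᵢ₊₁ + 1) / 2` when `λᵢ₊₁` is odd
provided `S i + i` is even.

That parity comes from the involution: unless `σ` swaps `i` and `i + 1`, the set `{1, …, i}` is
a union of `σ`-orbits, each pair contributing `2λ` and each fixed point an odd `λ` to `S i`, so
`S i` is congruent to the number of fixed points, hence to `i`. If `σ` does swap them and
`λᵢ₊₁` is odd, then so is `λᵢ = λᵢ₊₁`, and `S i ≡ S (i - 1) + 1 ≡ i` by the first case.
-/

/-- The invariant degree sequence associated to a partition `lam`:
`degSeq lam r` is the least `i` with `r ≤ λ₁ + ⋯ + λᵢ`; for a partition with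
positive parts `λ₁ ≥ ⋯ ≥ λₙ` this lists each value `i` exactly `λᵢ` times,
in non-decreasing order. -/
noncomputable def degSeq (lam : ℕ → ℕ) (r : ℕ) : ℕ :=
  sInf {i : ℕ | r ≤ ∑ k ∈ Finset.Icc 1 i, lam k}

open Finset

def partialSum (lam : ℕ → ℕ) (i : ℕ) : ℕ := ∑ k ∈ Icc 1 i, lam k

lemma partialSum_zero (lam : ℕ → ℕ) : partialSum lam 0 = 0 := by
  simp [partialSum]

lemma partialSum_succ (lam : ℕ → ℕ) (i : ℕ) :
    partialSum lam (i + 1) = partialSum lam i + lam (i + 1) :=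
  sum_Icc_succ_top (by omega) lam

lemma partialSum_mono (lam : ℕ → ℕ) : Monotone (partialSum lam) := fun _ _ h =>
  sum_le_sum_of_subset (Icc_subset_Icc le_rfl h)

lemma degSeq_eq_of_mem_Ioc {lam : ℕ → ℕ} {i r : ℕ}
    (hr : r ∈ Ioc (partialSum lam i) (partialSum lam (i + 1))) : degSeq lam r = i + 1 := by
  rw [mem_Ioc] at hr
  refine (Nat.sInf_upward_closed_eq_succ_iff (fun _ _ hk h => ?_) i).2
    ⟨hr.2, fun h => hr.1.not_ge h⟩
  exact h.trans (partialSum_mono lam hk)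

lemma card_filter_even_add_Ioc (c : ℕ) {a b : ℕ} (hab : a ≤ b) :
    #{r ∈ Ioc a b | Even (r + c)} = (b + c) / 2 - (a + c) / 2 := by
  induction b, hab using Nat.le_induction with
  | base => simp
  | succ b hab ih =>
    rw [← insert_Ioc_right_eq_Ioc_add_one hab, filter_insert]
    split_ifs with h
    · rw [card_insert_of_notMem (by simp), ih]
      rw [Nat.even_iff] at h
      omega
    · rw [ih]
      rw [Nat.not_even_iff] at h
      omega

lemma two_mul_card_filter_even_add_degSeq_Ioc (lam : ℕ → ℕ) (i : ℕ)
    (hpar : Odd (lam (i + 1)) → Even (partialSum lam i + i)) :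
    2 * #{r ∈ Ioc (partialSum lam i) (partialSum lam (i + 1)) | Even (r + degSeq lam r)} =
      lam (i + 1) + if Odd (lam (i + 1)) then 1 else 0 := by
  rw [filter_congr fun r hr => by rw [degSeq_eq_of_mem_Ioc hr],
    card_filter_even_add_Ioc _ (partialSum_mono lam i.le_succ), partialSum_succ]
  split_ifs with hodd
  · have := hpar hodd
    rw [Nat.odd_iff] at hodd
    rw [Nat.even_iff] at this
    omega
  · rw [Nat.not_odd_iff] at hodd
    omega

lemma two_mul_card_filter_even_add_degSeq (lam : ℕ → ℕ) (n : ℕ)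
    (hpar : ∀ i < n, Odd (lam (i + 1)) → Even (partialSum lam i + i)) :
    2 * #{r ∈ Ioc 0 (partialSum lam n) | Even (r + degSeq lam r)} =
      ∑ i ∈ Icc 1 n, (lam i + if Odd (lam i) then 1 else 0) := by
  induction n with
  | zero => simp [partialSum_zero]
  | succ n ih =>
    rw [sum_Icc_succ_top (by omega), ← ih fun i hi => hpar i (by omega),
      ← two_mul_card_filter_even_add_degSeq_Ioc lam n (hpar n (by omega)),
      ← Ioc_union_Ioc_eq_Ioc (Nat.zero_le _) (partialSum_mono lam n.le_succ), filter_union,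
      card_union_of_disjoint (disjoint_filter_filter (Ioc_disjoint_Ioc_of_le le_rfl)), mul_add]

lemma exists_swap_pred {lam σ : ℕ → ℕ} (hinv : ∀ i, σ (σ i) = i) (hσ0 : σ 0 = 0)
    (hσlam : ∀ i, lam (σ i) = lam i) {i : ℕ} (hswap : σ (i + 1) = i) :
    ∃ k, i = k + 1 ∧ σ (k + 1) = k + 1 + 1 ∧ lam (k + 1) = lam (k + 1 + 1) := by
  have hσi : σ i = i + 1 := by simpa [hswap] using hinv (i + 1)
  obtain ⟨k, rfl⟩ : ∃ k, i = k + 1 :=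
    Nat.exists_eq_add_one.2 <| Nat.pos_of_ne_zero fun hi => by simp [hi, hσ0] at hσi
  exact ⟨k, rfl, hσi, by simpa [hswap] using hσlam (k + 1 + 1)⟩

lemma even_partialSum_add_of_not_swap {n : ℕ} {lam σ : ℕ → ℕ}
    (hinv : ∀ i, σ (σ i) = i) (hσ0 : σ 0 = 0) (hσlam : ∀ i, lam (σ i) = lam i)
    (hσnear : ∀ i, 1 ≤ i → i ≤ n → σ i = i - 1 ∨ σ i = i ∨ σ i = i + 1)
    (hodd : ∀ i, 1 ≤ i → i ≤ n → σ i = i → Odd (lam i)) :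
    ∀ i ≤ n, σ (i + 1) ≠ i → Even (partialSum lam i + i) := by
  intro i
  induction i using Nat.strong_induction_on with
  | _ i ih =>
  intro hin hswap
  rcases i with _ | j
  · simp [partialSum_zero]
  rcases hσnear (j + 1) (by omega) hin with hpair | hfix | hnext
  · rw [Nat.add_sub_cancel] at hpair
    obtain ⟨k, rfl, hσk, hlam⟩ := exists_swap_pred hinv hσ0 hσlam hpair
    have := ih k (by omega) (by omega) (by rw [hσk]; omega)
    rw [Nat.even_iff, partialSum_succ, partialSum_succ] at *
    omega
  · have hodd := hodd (j + 1) (by omega) hin hfix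
    have := ih j (by omega) (by omega) (by rw [hfix]; omega)
    rw [Nat.odd_iff] at hodd
    rw [Nat.even_iff, partialSum_succ] at *
    omega
  · exact absurd (by simpa [hnext] using hinv (j + 1)) hswap

lemma even_partialSum_add_of_odd {n : ℕ} {lam σ : ℕ → ℕ}
    (hinv : ∀ i, σ (σ i) = i) (hσ0 : σ 0 = 0) (hσlam : ∀ i, lam (σ i) = lam i)
    (hσnear : ∀ i, 1 ≤ i → i ≤ n → σ i = i - 1 ∨ σ i = i ∨ σ i = i + 1)
    (hodd : ∀ i, 1 ≤ i → i ≤ n → σ i = i → Odd (lam i)) :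
    ∀ i < n, Odd (lam (i + 1)) → Even (partialSum lam i + i) := by
  have hcut := even_partialSum_add_of_not_swap hinv hσ0 hσlam hσnear hodd
  intro i hin hlam
  by_cases hswap : σ (i + 1) = i
  · obtain ⟨k, rfl, hσk, hlam'⟩ := exists_swap_pred hinv hσ0 hσlam hswap
    have := hcut k (by omega) (by rw [hσk]; omega)
    rw [Nat.odd_iff] at hlam
    rw [Nat.even_iff, partialSum_succ] at *
    omega
  · exact hcut i hin.le hswap

theorem card_even_r_add_deg_general (N n : ℕ) (lam : ℕ → ℕ) (σ : ℕ → ℕ)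
    (hsum : ∑ i ∈ Finset.Icc 1 n, lam i = N)
    (hinv : ∀ i, σ (σ i) = i)
    (hσlam : ∀ i, lam (σ i) = lam i)
    (hσnear : ∀ i, 1 ≤ i → i ≤ n → σ i = i - 1 ∨ σ i = i ∨ σ i = i + 1)
    (hσid : ∀ i, i = 0 ∨ n < i → σ i = i)
    (hodd : ∀ i, 1 ≤ i → i ≤ n → σ i = i → Odd (lam i)) :
    ((Finset.Icc 1 N).filter fun r => Even (r + degSeq lam r)).card =
      (N + ((Finset.Icc 1 n).filter fun i => Odd (lam i)).card) / 2 := by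
  have hcount := two_mul_card_filter_even_add_degSeq lam n
    (even_partialSum_add_of_odd hinv (hσid 0 (Or.inl rfl)) hσlam hσnear hodd)
  have hN : partialSum lam n = N := hsum
  rw [sum_add_distrib, ← card_filter, hsum, hN, ← Icc_add_one_left_eq_Ioc, zero_add] at hcount
  omega

/-- Let `λ = (λ₁ ≥ ⋯ ≥ λₙ)` be a partition of `N` with an involution `i ↦ σ i`
on `{1,…,n}` satisfying `λ_{σ i} = λᵢ` and `σ i ∈ {i-1, i, i+1}`, and such that
`λᵢ` is odd whenever `σ i = i`.  Then the number of indices `r ∈ {1,…,N}` with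
`r + d_r` even equals `(N + #{i : λᵢ odd})/2`. -/
theorem card_even_r_add_deg (N n : ℕ) (lam : ℕ → ℕ) (σ : ℕ → ℕ)
    (h0 : lam 0 = 0)
    (hpos : ∀ i, 1 ≤ i → i ≤ n → 1 ≤ lam i)
    (hsupp : ∀ i, n < i → lam i = 0)
    (hmono : ∀ i, 1 ≤ i → lam (i + 1) ≤ lam i)
    (hsum : ∑ i ∈ Finset.Icc 1 n, lam i = N)
    (hinv : ∀ i, σ (σ i) = i)
    (hσlam : ∀ i, lam (σ i) = lam i)
    (hσnear : ∀ i, 1 ≤ i → i ≤ n → σ i = i - 1 ∨ σ i = i ∨ σ i = i + 1)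
    (hσid : ∀ i, i = 0 ∨ n < i → σ i = i)
    (hodd : ∀ i, 1 ≤ i → i ≤ n → σ i = i → Odd (lam i)) :
    ((Finset.Icc 1 N).filter fun r => Even (r + degSeq lam r)).card =
      (N + ((Finset.Icc 1 n).filter fun i => Odd (lam i)).card) / 2 :=
  card_even_r_add_deg_general N n lam σ hsum hinv hσlam hσnear hσid hodd
end

section
/- Let λ = (λ₁,...,λₙ) ∈ P_ε(N) and suppose i is an admissible index of Case 1 type, i.e. λᵢ ≥ λ_{i+1} + 2. Define λ^{(i)} = (λ₁-2, ..., λᵢ-2, λ_{i+1}, ..., λₙ). Then λ^{(i)} (after deleting zero parts) is a non-increasing partition of N - 2i and lies in P_ε(N - 2i). -/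
/-- `lam` represents a partition of `N` with `n` positive parts lying in `P_ε(N)`:
it is non-increasing, supported on `[1, n]`, sums to `N`, and every part `v`
with `ε * (-1)^v = 1` occurs with even multiplicity. -/
def IsPartitionEps (ε : ℤ) (N n : ℕ) (lam : ℕ → ℕ) : Prop :=
  lam 0 = 0 ∧
  (∀ i, 1 ≤ i → i ≤ n → 1 ≤ lam i) ∧
  (∀ i, n < i → lam i = 0) ∧
  (∀ i, 1 ≤ i → lam (i + 1) ≤ lam i) ∧
  (∑ i ∈ Finset.Icc 1 n, lam i) = N ∧
  (∀ v, 1 ≤ v → ε * (-1) ^ v = 1 →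
    Even ((Finset.Icc 1 n).filter fun i => lam i = v).card)

/-- `i ∈ Δ(λ)`: `i` is a 2-step of `lam`, with the self-paired conditions
`i = i'` and `i+1 = (i+1)'` encoded by the parity criterion `ε(-1)^{λᵢ} = -1`. -/
def IsDeltaIdx (ε : ℤ) (lam : ℕ → ℕ) (i : ℕ) : Prop :=
  1 ≤ i ∧ ε * (-1) ^ lam i = -1 ∧ ε * (-1) ^ lam (i + 1) = -1 ∧
    lam (i - 1) ≠ lam i ∧ lam (i + 1) ≤ lam i ∧ lam (i + 1) ≠ lam (i + 2)

instance (ε : ℤ) (lam : ℕ → ℕ) : DecidablePred (IsDeltaIdx ε lam) := fun i => by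
  unfold IsDeltaIdx; infer_instance

/-- `λ_{i-1} - λᵢ` is a positive even number (a bad left boundary for the 2-step at `i`). -/
def BadLeft (lam : ℕ → ℕ) (i : ℕ) : Prop :=
  0 < lam (i - 1) - lam i ∧ Even (lam (i - 1) - lam i)

/-- `λ_{i+1} - λ_{i+2}` is a positive even number (a bad right boundary for the 2-step at `i`). -/
def BadRight (lam : ℕ → ℕ) (i : ℕ) : Prop :=
  0 < lam (i + 1) - lam (i + 2) ∧ Even (lam (i + 1) - lam (i + 2))

instance (lam : ℕ → ℕ) : DecidablePred (BadLeft lam) := fun i => by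
  unfold BadLeft; infer_instance

instance (lam : ℕ → ℕ) : DecidablePred (BadRight lam) := fun i => by
  unfold BadRight; infer_instance

/-- `(i, i+1)` is a bad 2-step of `lam`. -/
def IsBadStep (ε : ℤ) (lam : ℕ → ℕ) (i : ℕ) : Prop :=
  IsDeltaIdx ε lam i ∧ (BadLeft lam i ∨ BadRight lam i)

instance (ε : ℤ) (lam : ℕ → ℕ) : DecidablePred (IsBadStep ε lam) := fun i => by
  unfold IsBadStep; infer_instance

/-- `(i, i+1)` is a good 2-step of `lam`. -/
def IsGoodStep (ε : ℤ) (lam : ℕ → ℕ) (i : ℕ) : Prop :=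
  IsDeltaIdx ε lam i ∧ ¬ BadLeft lam i ∧ ¬ BadRight lam i

/-- `lam` is non-singular: it has no bad 2-steps. -/
def NonSingular (ε : ℤ) (lam : ℕ → ℕ) : Prop := ∀ i, ¬ IsBadStep ε lam i

/-- Case 1 of the Kempken–Spaltenstein algorithm occurs at `i`: `λᵢ ≥ λ_{i+1} + 2`. -/
def Case1At (lam : ℕ → ℕ) (i : ℕ) : Prop := 1 ≤ i ∧ lam (i + 1) + 2 ≤ lam i

/-- Case 2 of the Kempken–Spaltenstein algorithm occurs at `i`: `i ∈ Δ(λ)` and `λᵢ = λ_{i+1}`. -/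
def Case2At (ε : ℤ) (lam : ℕ → ℕ) (i : ℕ) : Prop :=
  IsDeltaIdx ε lam i ∧ lam i = lam (i + 1)

/-- The Case 1 move: subtract `2` from the first `i` parts. -/
def case1 (lam : ℕ → ℕ) (i : ℕ) : ℕ → ℕ := fun j =>
  if 1 ≤ j ∧ j ≤ i then lam j - 2 else lam j

/-- The Case 2 move: subtract `2` from the first `i - 1` parts and `1` from parts `i`, `i+1`. -/
def case2 (lam : ℕ → ℕ) (i : ℕ) : ℕ → ℕ := fun j =>
  if 1 ≤ j ∧ j < i then lam j - 2 else if j = i ∨ j = i + 1 then lam j - 1 else lam j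

/-- One step of the KS algorithm at index `i` (Case 1 and Case 2 are mutually exclusive). -/
def ksApply (lam : ℕ → ℕ) (i : ℕ) : ℕ → ℕ :=
  if lam (i + 1) + 2 ≤ lam i then case1 lam i else case2 lam i

/-- Iterated application of the KS algorithm along a list of indices: `λ^𝐢`. -/
def ksIter (lam : ℕ → ℕ) : List ℕ → ℕ → ℕ
  | [] => lam
  | i :: t => ksIter (ksApply lam i) t

/-- `𝐢` is an admissible sequence for `lam`: at each stage, Case 1 or Case 2 occurs
at the next index. -/
def AdmissibleSeq (ε : ℤ) (lam : ℕ → ℕ) : List ℕ → Prop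
  | [] => True
  | i :: t => (Case1At lam i ∨ Case2At ε lam i) ∧ AdmissibleSeq ε (ksApply lam i) t

/-- `s(λ) = Σᵢ ⌊(λᵢ - λ_{i+1})/2⌋`. -/
def sFun (n : ℕ) (lam : ℕ → ℕ) : ℕ := ∑ i ∈ Finset.Icc 1 n, (lam i - lam (i + 1)) / 2

/-- `|Δ(λ)|`, the number of 2-steps. -/
def deltaCard (ε : ℤ) (n : ℕ) (lam : ℕ → ℕ) : ℕ :=
  ((Finset.Icc 1 n).filter (IsDeltaIdx ε lam)).card

/-- `|Δ_bad(λ)|`, the number of bad 2-steps. -/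
def badCard (ε : ℤ) (n : ℕ) (lam : ℕ → ℕ) : ℕ :=
  ((Finset.Icc 1 n).filter (IsBadStep ε lam)).card

/-- The good 2-cluster `i, i+2, ..., i+2(k-1)` (with `k ≥ 2` elements): a chain of
2-steps at distance `2` with neither boundary difference a positive even number. -/
def IsGoodCluster (ε : ℤ) (lam : ℕ → ℕ) (i k : ℕ) : Prop :=
  2 ≤ k ∧ (∀ j, j < k → IsDeltaIdx ε lam (i + 2 * j)) ∧
    ¬ BadLeft lam i ∧ ¬ BadRight lam (i + 2 * (k - 1))

instance (ε : ℤ) (lam : ℕ → ℕ) (i k : ℕ) : Decidable (IsGoodCluster ε lam i k) := by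
  unfold IsGoodCluster; infer_instance

/-- `|Σ(λ)|`, the number of good 2-clusters. -/
def goodClusterCard (ε : ℤ) (n : ℕ) (lam : ℕ → ℕ) : ℕ :=
  ((Finset.Icc 1 n ×ˢ Finset.Icc 2 n).filter fun p => IsGoodCluster ε lam p.1 p.2).card

/-- `c(λ) = s(λ) + |Δ(λ)|`. -/
def cInt (ε : ℤ) (n : ℕ) (lam : ℕ → ℕ) : ℤ :=
  (sFun n lam : ℤ) + (deltaCard ε n lam : ℤ)

/-- `z(λ) = s(λ) + |Δ(λ)| - (|Δ_bad(λ)| - |Σ(λ)|)`. -/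
def zInt (ε : ℤ) (n : ℕ) (lam : ℕ → ℕ) : ℤ :=
  (sFun n lam : ℤ) + (deltaCard ε n lam : ℤ) -
    ((badCard ε n lam : ℤ) - (goodClusterCard ε n lam : ℤ))

/-!
Every part `λⱼ` with `j ≤ i` is at least `λ_{i+1} + 2`, and every later part is at most
`λ_{i+1}`. Hence each value occurs either only among the first `i` parts or only among the
others, so the even multiplicity of `v + 2` in `λ` is its multiplicity among the first `i`
parts, and that of `v` is its multiplicity among the remaining ones. The multiplicity of `v`
in `λ^{(i)}` is the sum of these two, and `v`, `v + 2` have the same parity.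
-/

open Finset

theorem card_filter_Ioc_consecutive (p : ℕ → Prop) [DecidablePred p] {a b c : ℕ}
    (hab : a ≤ b) (hbc : b ≤ c) :
    #{j ∈ Ioc a b | p j} + #{j ∈ Ioc b c | p j} = #{j ∈ Ioc a c | p j} := by
  simp only [card_filter]
  exact sum_Ioc_consecutive _ hab hbc

theorem exists_le_forall_pos_iff_le {f : ℕ → ℕ} {n : ℕ} (hf : AntitoneOn f {x | 1 ≤ x})
    (hzero : ∀ j, n < j → f j = 0) : ∃ m ≤ n, ∀ j, 1 ≤ j → (0 < f j ↔ j ≤ m) := by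
  set m := Nat.findGreatest (0 < f ·) n with hm
  refine ⟨m, Nat.findGreatest_le n, fun j hj => ⟨fun hpos => ?_, fun hjm => ?_⟩⟩
  · have hjn : j ≤ n := by
      by_contra h
      exact hpos.ne' (hzero j (by omega))
    exact Nat.le_findGreatest hjn hpos
  · have hm_pos : 0 < f m := Nat.findGreatest_of_ne_zero (P := (0 < f ·)) hm.symm (by omega)
    exact hm_pos.trans_le (hf hj (hj.trans hjm) hjm)

theorem exists_le_isPartitionEps {ε : ℤ} {N n : ℕ} {f : ℕ → ℕ} (h0 : f 0 = 0)
    (hmono : ∀ j, 1 ≤ j → f (j + 1) ≤ f j) (hzero : ∀ j, n < j → f j = 0)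
    (hsum : ∑ j ∈ Icc 1 n, f j = N)
    (hpar : ∀ v, 1 ≤ v → ε * (-1) ^ v = 1 → Even #{j ∈ Icc 1 n | f j = v}) :
    ∃ m ≤ n, IsPartitionEps ε N m f := by
  obtain ⟨m, hmn, hpos⟩ := exists_le_forall_pos_iff_le (antitoneOn_nat_Ici_of_succ_le hmono) hzero
  have hzero' : ∀ j, m < j → f j = 0 := fun j hj => by
    have := hpos j (by omega)
    omega
  refine ⟨m, hmn, h0, fun j h1 h2 => (hpos j h1).2 h2, hzero', hmono, ?_, fun v hv hvε => ?_⟩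
  · rw [← hsum]
    refine sum_subset (Icc_subset_Icc_right hmn) fun j hjn hjm => hzero' j ?_
    simp only [mem_Icc] at hjn hjm
    omega
  · convert hpar v hv hvε using 2
    ext j
    simp only [mem_filter, mem_Icc]
    by_cases h : 1 ≤ j
    · have := hpos j h
      omega
    · omega

section Case1

variable {lam : ℕ → ℕ} {i n : ℕ}

theorem case1_of_le {j : ℕ} (h1 : 1 ≤ j) (hj : j ≤ i) : case1 lam i j = lam j - 2 :=
  if_pos ⟨h1, hj⟩

theorem case1_of_lt {j : ℕ} (hj : i < j) : case1 lam i j = lam j :=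
  if_neg (by omega)

theorem case1_zero : case1 lam i 0 = lam 0 :=
  if_neg (by omega)

theorem case1_succ_le (hmono : ∀ j, 1 ≤ j → lam (j + 1) ≤ lam j)
    (hgap : lam (i + 1) + 2 ≤ lam i) {j : ℕ} (hj : 1 ≤ j) :
    case1 lam i (j + 1) ≤ case1 lam i j := by
  have := hmono j hj
  rcases lt_trichotomy j i with h | rfl | h
  · rw [case1_of_le (by omega) (show j + 1 ≤ i from h), case1_of_le hj h.le]
    omega
  · rw [case1_of_lt (by omega), case1_of_le hj le_rfl]
    omega
  · rwa [case1_of_lt (by omega), case1_of_lt h]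

theorem sum_case1_add (hi : i ≤ n) (hhead : ∀ j, 1 ≤ j → j ≤ i → 2 ≤ lam j) :
    ∑ j ∈ Ioc 0 n, case1 lam i j + 2 * i = ∑ j ∈ Ioc 0 n, lam j := by
  rw [← sum_Ioc_consecutive _ i.zero_le hi, ← sum_Ioc_consecutive _ i.zero_le hi]
  have htail : ∑ j ∈ Ioc i n, case1 lam i j = ∑ j ∈ Ioc i n, lam j :=
    sum_congr rfl fun j hj => case1_of_lt (mem_Ioc.1 hj).1
  have hhead_sum : ∑ j ∈ Ioc 0 i, case1 lam i j + 2 * i = ∑ j ∈ Ioc 0 i, lam j := by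
    have h2i : 2 * i = ∑ _j ∈ Ioc 0 i, 2 := by simp [mul_comm]
    rw [h2i, ← sum_add_distrib]
    refine sum_congr rfl fun j hj => ?_
    obtain ⟨h1, h2⟩ := mem_Ioc.1 hj
    have := hhead j h1 h2
    rw [case1_of_le h1 h2]
    omega
  omega

theorem card_filter_case1_eq (hi : i ≤ n) (hhead : ∀ j, 1 ≤ j → j ≤ i → 2 ≤ lam j) (v : ℕ) :
    #{j ∈ Ioc 0 n | case1 lam i j = v} =
      #{j ∈ Ioc 0 i | lam j = v + 2} + #{j ∈ Ioc i n | lam j = v} := by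
  rw [← card_filter_Ioc_consecutive _ i.zero_le hi]
  congr 2 <;> refine filter_congr fun j hj => ?_
  · obtain ⟨h1, h2⟩ := mem_Ioc.1 hj
    have := hhead j h1 h2
    rw [case1_of_le h1 h2]
    omega
  · rw [case1_of_lt (mem_Ioc.1 hj).1]

theorem even_card_filter_Ioc_split_of_gap {L w : ℕ} (hi : i ≤ n)
    (hhead : ∀ j, 1 ≤ j → j ≤ i → L + 2 ≤ lam j) (htail : ∀ j, i < j → lam j ≤ L)
    (heven : Even #{j ∈ Ioc 0 n | lam j = w}) :
    Even #{j ∈ Ioc 0 i | lam j = w} ∧ Even #{j ∈ Ioc i n | lam j = w} := by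
  have hone_empty : #{j ∈ Ioc 0 i | lam j = w} = 0 ∨ #{j ∈ Ioc i n | lam j = w} = 0 := by
    by_contra! h
    obtain ⟨a, ha⟩ := card_pos.1 (Nat.pos_of_ne_zero h.1)
    obtain ⟨b, hb⟩ := card_pos.1 (Nat.pos_of_ne_zero h.2)
    simp only [mem_filter, mem_Ioc] at ha hb
    have := hhead a ha.1.1 ha.1.2
    have := htail b hb.1.1
    omega
  rw [← card_filter_Ioc_consecutive _ i.zero_le hi] at heven
  rcases hone_empty with h | h
  · exact ⟨by rw [h]; exact Even.zero, by rwa [h, zero_add] at heven⟩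
  · exact ⟨by rwa [h, add_zero] at heven, by rw [h]; exact Even.zero⟩

end Case1

theorem case1_mem_PartitionEps_general (ε : ℤ) (N n : ℕ)
    (lam : ℕ → ℕ) (hpart : IsPartitionEps ε N n lam)
    (i : ℕ) (hcase1 : lam (i + 1) + 2 ≤ lam i) :
    ∃ n', n' ≤ n ∧ IsPartitionEps ε (N - 2 * i) n' (case1 lam i) := by
  obtain ⟨h0, -, hzero, hmono, hsum, hpar⟩ := hpart
  have hanti := antitoneOn_nat_Ici_of_succ_le hmono
  have hhead : ∀ j, 1 ≤ j → j ≤ i → lam (i + 1) + 2 ≤ lam j := fun j h1 h2 =>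
    hcase1.trans (hanti h1 (h1.trans h2) h2)
  have htail : ∀ j, i < j → lam j ≤ lam (i + 1) := fun j hj =>
    hanti (Nat.le_add_left 1 i) (Nat.le_add_left 1 i |>.trans hj) hj
  have hin : i ≤ n := by
    by_contra h
    have := hzero i (by omega)
    omega
  have hhead2 : ∀ j, 1 ≤ j → j ≤ i → 2 ≤ lam j := fun j h1 h2 => by
    have := hhead j h1 h2
    omega
  have hIcc : Icc 1 n = Ioc 0 n := Icc_add_one_left_eq_Ioc 0 n
  rw [hIcc] at hsum hpar
  refine exists_le_isPartitionEps (by rw [case1_zero, h0])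
    (fun j hj => case1_succ_le hmono hcase1 hj)
    (fun j hj => (case1_of_lt (by omega)).trans (hzero j hj)) ?_ fun v hv hvε => ?_
  · have := sum_case1_add hin hhead2
    rw [hIcc]
    omega
  · have hvε2 : ε * (-1) ^ (v + 2) = 1 := by simpa [pow_add] using hvε
    rw [hIcc, card_filter_case1_eq hin hhead2]
    exact (even_card_filter_Ioc_split_of_gap hin hhead htail (hpar (v + 2) (by omega) hvε2)).1.add
      (even_card_filter_Ioc_split_of_gap hin hhead htail (hpar v hv hvε)).2

/-- Closure of `P_ε` under Case 1 of the KS algorithm: if `λ ∈ P_ε(N)` and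
`λᵢ ≥ λ_{i+1} + 2`, then `λ^{(i)} = (λ₁-2, …, λᵢ-2, λ_{i+1}, …, λₙ)` (after
deleting zero parts, i.e. for a suitable number `n' ≤ n` of parts) is a
non-increasing partition of `N - 2i` lying in `P_ε(N - 2i)`. -/
theorem case1_mem_PartitionEps (ε : ℤ) (hε : ε = 1 ∨ ε = -1) (N n : ℕ)
    (lam : ℕ → ℕ) (hpart : IsPartitionEps ε N n lam)
    (i : ℕ) (hi : 1 ≤ i) (hcase1 : lam (i + 1) + 2 ≤ lam i) :
    ∃ n', n' ≤ n ∧ IsPartitionEps ε (N - 2 * i) n' (case1 lam i) :=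
  case1_mem_PartitionEps_general ε N n lam hpart i hcase1
end

section
/- Let λ ∈ P_ε(N) with Δ(λ) its set of 2-steps, and suppose Case 2 of the KS algorithm occurs at index i, i.e. i ∈ Δ(λ) and λᵢ = λ_{i+1}. Let λ^{(i)} = (λ₁-2,...,λ_{i-1}-2, λᵢ-1, λ_{i+1}-1, λ_{i+2},...,λₙ). Then Δ(λ^{(i)}) = Δ(λ) \ {i}. -/
private lemma delta_case2_aux (ε : ℤ) (b : ℕ)
    (hpar : ∀ x : ℕ, (ε * (-1) ^ x = -1) ↔ x % 2 = b)
    (lam : ℕ → ℕ) (h0 : lam 0 = 0)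
    (hmono : ∀ a k, 1 ≤ a → a ≤ k → lam k ≤ lam a)
    (i : ℕ) (hcase2 : Case2At ε lam i) :
    ∀ j, IsDeltaIdx ε (case2 lam i) j ↔ (IsDeltaIdx ε lam j ∧ j ≠ i) := by
  obtain ⟨⟨hi1, hpi, hpi1, hne_l, hle, hne_r⟩, heq⟩ := hcase2
  rw [hpar] at hpi hpi1
  have Elt : ∀ k, k < i → case2 lam i k = lam k - 2 := by
    intro k hk
    simp only [case2]
    split_ifs with h1 h2
    · rfl
    · omega
    · have hk0 : k = 0 := by omega
      subst hk0; omega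
  have Ei : case2 lam i i = lam i - 1 := by
    simp only [case2]; rw [if_neg (by omega), if_pos (Or.inl trivial)]
  have Ei1 : case2 lam i (i + 1) = lam (i + 1) - 1 := by
    simp only [case2]; rw [if_neg (by omega), if_pos (Or.inr trivial)]
  have Egt : ∀ k, i + 1 < k → case2 lam i k = lam k := by
    intro k hk; simp only [case2]; rw [if_neg (by omega), if_neg (by omega)]
  -- positivity of lam i
  have hpos : 1 ≤ lam i := by
    have := hmono (i + 1) (i + 2) (by omega) (by omega)
    omega
  intro j
  rcases Nat.lt_trichotomy j i with hj | rfl | hj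
  · -- j < i
    rcases Nat.eq_zero_or_pos j with rfl | hj1
    · simp only [IsDeltaIdx]
      exact ⟨fun h => absurd h.1 (by omega), fun h => absurd h.1.1 (by omega)⟩
    have hstep : lam j ≤ lam (j - 1) ∨ (j = 1 ∧ lam (j - 1) = 0) := by
      rcases Nat.lt_or_ge j 2 with h2 | h2
      · right
        have : j = 1 := by omega
        subst this; exact ⟨rfl, h0⟩
      · exact Or.inl (hmono (j - 1) j (by omega) (by omega))
    rcases (by omega : j + 1 = i ∨ j + 2 = i ∨ j + 2 < i) with hcase | hcase | hcase
    · -- Case D : j = i - 1, both sides false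
      subst hcase
      simp only [IsDeltaIdx]
      rw [Elt (j - 1) (by omega), Elt j (by omega), Ei,
        (show case2 lam (j + 1) (j + 2) = lam (j + 2) - 1 from Ei1)]
      simp only [hpar]
      have heq' : lam (j + 1) = lam (j + 2) := heq
      have hpi' : lam (j + 1) % 2 = b := hpi
      have hpos' : 1 ≤ lam (j + 1) := hpos
      have hne' : lam (j + 2) ≠ lam (j + 3) := hne_r
      omega
    · -- Case E2 : j = i - 2
      subst hcase
      simp only [IsDeltaIdx]
      rw [Elt (j - 1) (by omega), Elt j (by omega), Elt (j + 1) (by omega), Ei]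
      simp only [hpar]
      have hne_l' : lam (j + 1) ≠ lam (j + 2) := hne_l
      have hpi' : lam (j + 2) % 2 = b := hpi
      have hpos' : 1 ≤ lam (j + 2) := hpos
      have f1 := hmono j (j + 1) (by omega) (by omega)
      have f2 := hmono (j + 1) (j + 2) (by omega) (by omega)
      omega
    · -- Case E1 : j + 2 < i
      simp only [IsDeltaIdx]
      rw [Elt (j - 1) (by omega), Elt j (by omega), Elt (j + 1) (by omega),
        Elt (j + 2) (by omega)]
      simp only [hpar]
      have f1 := hmono j (i - 1) (by omega) (by omega)
      have f2 := hmono (j + 1) (i - 1) (by omega) (by omega)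
      have f3 := hmono (j + 2) (i - 1) (by omega) (by omega)
      have f4 := hmono (i - 1) i (by omega) (by omega)
      have f7 := hmono j (j + 1) (by omega) (by omega)
      have f8 := hmono (j + 1) (j + 2) (by omega) (by omega)
      omega
  · -- j = i : LHS false by parity flip, RHS false since j ≠ j
    simp only [IsDeltaIdx]
    rw [Elt (j - 1) (by omega), Ei, Ei1, Egt (j + 2) (by omega)]
    simp only [hpar]
    omega
  · -- i < j
    rcases (by omega : j = i + 1 ∨ j = i + 2 ∨ i + 3 ≤ j) with hcase | hcase | hcase
    · -- j = i + 1 : both sides false since lam i = lam (i+1)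
      subst hcase
      simp only [IsDeltaIdx]
      rw [(show case2 lam i (i + 1 - 1) = lam (i + 1 - 1) - 1 from Ei),
        Ei1,
        (show case2 lam i (i + 1 + 1) = lam (i + 1 + 1) from Egt (i + 2) (by omega)),
        (show case2 lam i (i + 1 + 2) = lam (i + 1 + 2) from Egt (i + 3) (by omega))]
      simp only [hpar]
      have heq' : lam (i + 1 - 1) = lam (i + 1) := heq
      omega
    · -- j = i + 2
      subst hcase
      simp only [IsDeltaIdx]
      rw [(show case2 lam i (i + 2 - 1) = lam (i + 2 - 1) - 1 from Ei1),
        (show case2 lam i (i + 2) = lam (i + 2) from Egt (i + 2) (by omega)),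
        (show case2 lam i (i + 2 + 1) = lam (i + 2 + 1) from Egt (i + 3) (by omega)),
        (show case2 lam i (i + 2 + 2) = lam (i + 2 + 2) from Egt (i + 4) (by omega))]
      simp only [hpar]
      have hpi1' : lam (i + 2 - 1) % 2 = b := hpi1
      have hne_r' : lam (i + 2 - 1) ≠ lam (i + 2) := hne_r
      have f1 : lam (i + 2) ≤ lam (i + 2 - 1) := hmono (i + 1) (i + 2) (by omega) (by omega)
      omega
    · -- j ≥ i + 3
      simp only [IsDeltaIdx]
      rw [Egt (j - 1) (by omega), Egt j (by omega), Egt (j + 1) (by omega),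
        Egt (j + 2) (by omega)]
      simp only [hpar]
      omega

/-- If Case 2 of the KS algorithm occurs for `λ ∈ P_ε(N)` at index `i`
(i.e. `i ∈ Δ(λ)` and `λᵢ = λ_{i+1}`), then `Δ(λ^{(i)}) = Δ(λ) \ {i}`, where
`λ^{(i)} = (λ₁-2, …, λ_{i-1}-2, λᵢ-1, λ_{i+1}-1, λ_{i+2}, …, λₙ)`. -/
theorem delta_case2 (ε : ℤ) (hε : ε = 1 ∨ ε = -1) (N n : ℕ)
    (lam : ℕ → ℕ) (hpart : IsPartitionEps ε N n lam)
    (i : ℕ) (hcase2 : Case2At ε lam i) :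
    ∀ j, IsDeltaIdx ε (case2 lam i) j ↔ (IsDeltaIdx ε lam j ∧ j ≠ i) := by
  obtain ⟨h0, hpos, hzero, hmonostep, hsum, heven⟩ := hpart
  have hmono : ∀ a k, 1 ≤ a → a ≤ k → lam k ≤ lam a := by
    intro a k ha hak
    induction k with
    | zero => omega
    | succ m ih =>
      rcases Nat.eq_or_lt_of_le hak with h | h
      · exact h ▸ le_rfl
      · exact le_trans (hmonostep m (by omega)) (ih (by omega))
  rcases hε with rfl | rfl
  · refine delta_case2_aux 1 1 (fun x => ?_) lam h0 hmono i hcase2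
    rcases Nat.even_or_odd x with h | h
    · rw [h.neg_one_pow]; simp [Nat.even_iff.mp h]
    · rw [h.neg_one_pow]; simp [Nat.odd_iff.mp h]
  · refine delta_case2_aux (-1) 0 (fun x => ?_) lam h0 hmono i hcase2
    rcases Nat.even_or_odd x with h | h
    · rw [h.neg_one_pow]; simp [Nat.even_iff.mp h]
    · rw [h.neg_one_pow]; simp [Nat.odd_iff.mp h]
end

section
/- Let λ ∈ P_ε(N) and suppose (i, i+1) is a good 2-step of λ (i.e. i ∈ Δ(λ), and λ_{i-1} - λᵢ is not a positive even number, and λ_{i+1} - λ_{i+2} is not a positive even number) with λᵢ = λ_{i+1}. Then applying Case 2 of the KS algorithm at i yields λ^{(i)} with s(λ^{(i)}) = s(λ), where s(μ) = Σ_{j≥1} ⌊(μⱼ - μ_{j+1})/2⌋. -/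
lemma lam_anti (lam : ℕ → ℕ) (hmono : ∀ i, 1 ≤ i → lam (i + 1) ≤ lam i) :
    ∀ a b, 1 ≤ a → a ≤ b → lam b ≤ lam a := by
  intro a b ha hab
  induction b with
  | zero => omega
  | succ m ih =>
    rcases Nat.lt_or_ge a (m + 1) with h | h
    · exact le_trans (hmono m (by omega)) (ih (by omega))
    · have : a = m + 1 := by omega
      simp [this]

/-- If `(i, i+1)` is a good 2-step of `λ ∈ P_ε(N)` with `λᵢ = λ_{i+1}`, then
applying Case 2 of the KS algorithm at `i` does not change
`s(μ) = Σⱼ ⌊(μⱼ - μ_{j+1})/2⌋`:  `s(λ^{(i)}) = s(λ)`. -/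
theorem sFun_case2_of_good (ε : ℤ) (hε : ε = 1 ∨ ε = -1) (N n : ℕ)
    (lam : ℕ → ℕ) (hpart : IsPartitionEps ε N n lam)
    (i : ℕ) (hgood : IsGoodStep ε lam i) (heq : lam i = lam (i + 1)) :
    sFun n (case2 lam i) = sFun n lam := by
  obtain ⟨⟨hi1, _, _, hne_l, hle, hne_r⟩, hnbl, hnbr⟩ := hgood
  obtain ⟨h0, hpos, hzero, hmono, _, _⟩ := hpart
  have hanti := lam_anti lam hmono
  have h2 : lam (i + 2) ≤ lam (i + 1) := hmono (i + 1) (by omega)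
  have hpos1 : 1 ≤ lam (i + 1) := by omega
  have hdr : (lam (i + 1) - lam (i + 2)) % 2 = 1 := by
    rcases Nat.even_or_odd (lam (i + 1) - lam (i + 2)) with h | h
    · exact absurd ⟨by omega, h⟩ hnbr
    · exact Nat.odd_iff.mp h
  have key : ∀ j, 1 ≤ j →
      (case2 lam i j - case2 lam i (j + 1)) / 2 = (lam j - lam (j + 1)) / 2 := by
    intro j hj
    unfold case2
    rcases Nat.lt_or_ge (j + 1) i with h1 | h1
    · -- j + 1 < i
      have e1 : (1 ≤ j ∧ j < i) := ⟨hj, by omega⟩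
      have e2 : (1 ≤ j + 1 ∧ j + 1 < i) := ⟨by omega, h1⟩
      simp only [if_pos e1, if_pos e2]
      have hm1 : lam (j + 1) ≤ lam j := hmono j hj
      have hm2 : lam (i - 1) ≤ lam (j + 1) := hanti (j + 1) (i - 1) (by omega) (by omega)
      have hm3 : lam i ≤ lam (i - 1) := by
        have := hmono (i - 1) (by omega)
        have hii : i - 1 + 1 = i := by omega
        rwa [hii] at this
      omega
    rcases Nat.lt_or_ge j i with h2' | h2'
    · -- j + 1 = i
      have hji : j + 1 = i := by omega
      have e1 : (1 ≤ j ∧ j < i) := ⟨hj, by omega⟩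
      have e2 : ¬ (1 ≤ j + 1 ∧ j + 1 < i) := by omega
      have e3 : (j + 1 = i ∨ j + 1 = i + 1) := Or.inl hji
      simp only [if_pos e1, if_neg e2, if_pos e3]
      have hm3 : lam i ≤ lam j := by
        have := hmono j hj; rw [hji] at this; exact this
      have hne : lam j ≠ lam i := by
        have : i - 1 = j := by omega
        rw [this] at hne_l; exact hne_l
      have hdl : (lam j - lam i) % 2 = 1 := by
        rcases Nat.even_or_odd (lam j - lam i) with h | h
        · exfalso
          apply hnbl
          have hij : i - 1 = j := by omega
          exact ⟨by rw [hij]; omega, by rw [hij]; exact h⟩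
        · exact Nat.odd_iff.mp h
      rw [hji]
      omega
    rcases Nat.eq_or_lt_of_le h2' with h3 | h3
    · -- j = i
      have e1 : ¬ (1 ≤ j ∧ j < i) := by omega
      have e2 : (j = i ∨ j = i + 1) := Or.inl h3.symm
      have e3 : ¬ (1 ≤ j + 1 ∧ j + 1 < i) := by omega
      have e4 : (j + 1 = i ∨ j + 1 = i + 1) := Or.inr (by omega)
      simp only [if_neg e1, if_pos e2, if_neg e3, if_pos e4]
      subst h3
      omega
    rcases Nat.eq_or_lt_of_le h3 with h4 | h4
    · -- j = i + 1
      have hji : j = i + 1 := h4.symm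
      have e1 : ¬ (1 ≤ j ∧ j < i) := by omega
      have e2 : (j = i ∨ j = i + 1) := Or.inr hji
      have e3 : ¬ (1 ≤ j + 1 ∧ j + 1 < i) := by omega
      have e4 : ¬ (j + 1 = i ∨ j + 1 = i + 1) := by omega
      simp only [if_neg e1, if_pos e2, if_neg e3, if_neg e4]
      have a0 : lam j = lam (i + 1) := by rw [hji]
      have a1 : lam (j + 1) = lam (i + 2) := by rw [hji]
      omega
    · -- j ≥ i + 2
      have e1 : ¬ (1 ≤ j ∧ j < i) := by omega
      have e2 : ¬ (j = i ∨ j = i + 1) := by omega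
      have e3 : ¬ (1 ≤ j + 1 ∧ j + 1 < i) := by omega
      have e4 : ¬ (j + 1 = i ∨ j + 1 = i + 1) := by omega
      simp only [if_neg e1, if_neg e2, if_neg e3, if_neg e4]
  unfold sFun
  apply Finset.sum_congr rfl
  intro j hj
  rw [Finset.mem_Icc] at hj
  exact key j hj.1
end

section
/- Let λ ∈ P_ε(N) and let i be a Case-1 admissible index (λᵢ - λ_{i+1} ≥ 2), with λ^{(i)} = (λ₁-2,...,λᵢ-2, λ_{i+1},...,λₙ). Then Δ(λ^{(i)}) ⊆ Δ(λ). -/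
/-- If `i` is a Case-1 admissible index for `λ ∈ P_ε(N)` (i.e. `λᵢ ≥ λ_{i+1}+2`),
then `Δ(λ^{(i)}) ⊆ Δ(λ)`, where `λ^{(i)} = (λ₁-2, …, λᵢ-2, λ_{i+1}, …, λₙ)`. -/
theorem delta_case1_subset (ε : ℤ) (hε : ε = 1 ∨ ε = -1) (N n : ℕ)
    (lam : ℕ → ℕ) (hpart : IsPartitionEps ε N n lam)
    (i : ℕ) (hcase1 : Case1At lam i) :
    ∀ j, IsDeltaIdx ε (case1 lam i) j → IsDeltaIdx ε lam j := by
  obtain ⟨h0, hpos, hsupp, hmono, hsum, hpar⟩ := hpart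
  obtain ⟨hi1, hstep⟩ := hcase1
  -- antitonicity on [1, ∞)
  have hmono' : ∀ a b, 1 ≤ a → a ≤ b → lam b ≤ lam a := by
    intro a b ha hab
    obtain ⟨d, rfl⟩ := Nat.exists_eq_add_of_le hab
    clear hab
    induction d with
    | zero => simp
    | succ d ih =>
      have h1 : lam (a + d + 1) ≤ lam (a + d) := hmono _ (le_trans ha (Nat.le_add_right a d))
      have h2 : a + (d + 1) = a + d + 1 := by omega
      rw [h2]
      exact le_trans h1 ih
  have hge2 : ∀ j, 1 ≤ j → j ≤ i → 2 ≤ lam j := by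
    intro j hj hji
    have := hmono' j i hj hji
    omega
  -- parity transfer under subtracting 2
  have hpow : ∀ k, 2 ≤ lam k → ε * (-1) ^ (lam k - 2) = ε * (-1) ^ lam k := by
    intro k hk
    obtain ⟨m, hm⟩ := Nat.exists_eq_add_of_le hk
    rw [hm]
    have h2 : 2 + m - 2 = m := by omega
    rw [h2, pow_add]
    ring
  have e1 : ∀ k, 1 ≤ k → k ≤ i → case1 lam i k = lam k - 2 :=
    fun k h1 h2 => if_pos ⟨h1, h2⟩
  have e2 : ∀ k, ¬ (1 ≤ k ∧ k ≤ i) → case1 lam i k = lam k :=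
    fun k h => if_neg h
  intro j hj
  obtain ⟨hj1, hp1, hp2, hne1, _, hne2⟩ := hj
  refine ⟨hj1, ?_, ?_, ?_, hmono _ hj1, ?_⟩
  · -- parity at j
    by_cases h : j ≤ i
    · rw [e1 j hj1 h] at hp1
      rw [← hpow j (hge2 j hj1 h)]; exact hp1
    · rwa [e2 j (by omega)] at hp1
  · -- parity at j+1
    by_cases h : j + 1 ≤ i
    · rw [e1 (j+1) (by omega) h] at hp2
      rw [← hpow (j+1) (hge2 (j+1) (by omega) h)]; exact hp2
    · rwa [e2 (j+1) (by omega)] at hp2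
  · -- lam (j-1) ≠ lam j
    by_cases hji : j ≤ i
    · by_cases hj2 : 2 ≤ j
      · rw [e1 (j-1) (by omega) (by omega), e1 j hj1 hji] at hne1
        have g1 := hge2 (j-1) (by omega) (by omega)
        have g2 := hge2 j hj1 hji
        omega
      · have hj1' : j = 1 := by omega
        subst hj1'
        have g2 := hge2 1 le_rfl hji
        have h10 : (1:ℕ) - 1 = 0 := rfl
        rw [h10, h0]
        omega
    · by_cases hj2 : j = i + 1
      · subst hj2
        have hii : i + 1 - 1 = i := by omega
        rw [hii]
        omega
      · rw [e2 (j-1) (by omega), e2 j (by omega)] at hne1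
        exact hne1
  · -- lam (j+1) ≠ lam (j+2)
    by_cases h2 : j + 2 ≤ i
    · rw [e1 (j+1) (by omega) (by omega), e1 (j+2) (by omega) h2] at hne2
      have g1 := hge2 (j+1) (by omega) (by omega)
      have g2 := hge2 (j+2) (by omega) h2
      omega
    · by_cases h1 : j + 1 ≤ i
      · rw [show j + 2 = i + 1 from by omega, show j + 1 = i from by omega]
        omega
      · rw [e2 (j+1) (by omega), e2 (j+2) (by omega)] at hne2
        exact hne2
end

section
/- Let λ ∈ P_ε(N). If (i, i+1) is a good 2-step of λ and 𝐢 is any admissible sequence of KS-algorithm moves for λ such that i ∈ Δ(λ^𝐢), then (i, i+1) is a good 2-step for λ^𝐢. Consequently, if λ is non-singular (has no bad 2-steps), then λ^𝐢 is non-singular for every admissible sequence 𝐢. -/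
private lemma neg_one_pow_sub_two {x : ℕ} (hx : 2 ≤ x) : ((-1:ℤ))^(x-2) = (-1)^x := by
  obtain ⟨y, rfl⟩ : ∃ y, x = y + 2 := ⟨x - 2, by omega⟩
  simp [pow_succ]

private lemma neg_one_pow_sub_one {x : ℕ} (hx : 1 ≤ x) : ((-1:ℤ))^(x-1) = -(-1)^x := by
  obtain ⟨y, rfl⟩ : ∃ y, x = y + 1 := ⟨x - 1, by omega⟩
  simp [pow_succ]

private lemma eps_mod {ε : ℤ} (hε : ε = 1 ∨ ε = -1) {x y : ℕ}
    (hx : ε * (-1) ^ x = -1) (hy : ε * (-1) ^ y = -1) : x % 2 = y % 2 := by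
  have h : ((-1:ℤ))^x = (-1)^y := by
    rcases hε with rfl | rfl
    · rw [one_mul] at hx hy; rw [hx, hy]
    · have hx' : ((-1:ℤ))^x = 1 := by linarith [hx]
      have hy' : ((-1:ℤ))^y = 1 := by linarith [hy]
      rw [hx', hy']
  rcases Nat.even_or_odd x with hex | hox <;> rcases Nat.even_or_odd y with hey | hoy
  · rw [Nat.even_iff] at hex hey; omega
  · rw [hex.neg_one_pow, hoy.neg_one_pow] at h; norm_num at h
  · rw [hox.neg_one_pow, hey.neg_one_pow] at h; norm_num at h
  · rw [Nat.odd_iff] at hox hoy; omega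

private lemma mono_le {lam : ℕ → ℕ} (hmono : ∀ m, 1 ≤ m → lam (m+1) ≤ lam m)
    {a b : ℕ} (ha : 1 ≤ a) (hab : a ≤ b) : lam b ≤ lam a := by
  induction b, hab using Nat.le_induction with
  | base => exact le_refl _
  | succ n hn ih => exact le_trans (hmono n (le_trans ha hn)) ih

set_option maxHeartbeats 1000000 in
private lemma key_step {ε : ℤ} (hε : ε = 1 ∨ ε = -1) {lam : ℕ → ℕ} {j : ℕ}
    (h0 : lam 0 = 0) (hmono : ∀ m, 1 ≤ m → lam (m + 1) ≤ lam m)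
    (hmove : Case1At lam j ∨ Case2At ε lam j) (i : ℕ)
    (hΔ : IsDeltaIdx ε (ksApply lam j) i) :
    IsDeltaIdx ε lam i ∧
      (¬ IsBadStep ε lam i →
        ¬ BadLeft (ksApply lam j) i ∧ ¬ BadRight (ksApply lam j) i) := by
  have hj1 : 1 ≤ j := by
    rcases hmove with ⟨h, _⟩ | ⟨⟨h, _⟩, _⟩ <;> exact h
  obtain ⟨hi1, hp1, hp2, hne1, hle, hne2⟩ := hΔ
  have c0 : lam (i + 1) ≤ lam i := hmono i hi1
  have c1 : lam (i + 2) ≤ lam (i + 1) := hmono (i + 1) (by omega)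
  have c2 : 2 ≤ i → lam i ≤ lam (i - 1) := by
    intro h
    have h' := hmono (i - 1) (by omega)
    rwa [Nat.sub_add_cancel (by omega)] at h'
  have c3 : i = 1 → lam (i - 1) = 0 := by intro h; subst h; simpa using h0
  by_cases hc : lam (j + 1) + 2 ≤ lam j
  · -- Case 1
    have hv : ∀ m, ksApply lam j m = if 1 ≤ m ∧ m ≤ j then lam m - 2 else lam m := by
      intro m; simp [ksApply, hc, case1]
    have hpar : ∀ m, (ε * (-1) ^ (ksApply lam j m) = -1) ↔ (ε * (-1) ^ lam m = -1) := by
      intro m; rw [hv m]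
      by_cases h : 1 ≤ m ∧ m ≤ j
      · rw [if_pos h, neg_one_pow_sub_two (by have := mono_le hmono h.1 h.2; omega)]
      · rw [if_neg h]
    rw [hpar] at hp1 hp2
    have hABC : lam (i - 1) ≠ lam i ∧ lam (i + 1) ≠ lam (i + 2) ∧
        (¬ (BadLeft lam i ∨ BadRight lam i) →
          ¬ BadLeft (ksApply lam j) i ∧ ¬ BadRight (ksApply lam j) i) := by
      simp only [BadLeft, BadRight, Nat.even_iff]
      clear hpar hp1 hp2 hmove hε
      have hreg : i + 2 ≤ j ∨ i + 1 = j ∨ i = j ∨ i = j + 1 ∨ j + 2 ≤ i := by omega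
      rcases hreg with h | h | h | h | h
      · have E1 : ksApply lam j (i-1) = lam (i-1) - 2 ∨
            (lam (i-1) = 0 ∧ ksApply lam j (i-1) = 0) := by
          by_cases h1 : i = 1
          · have h2 := c3 h1
            right; exact ⟨h2, by rw [hv, if_neg (by omega)]; exact h2⟩
          · left; rw [hv, if_pos ⟨by omega, by omega⟩]
        have E2 : ksApply lam j i = lam i - 2 := by rw [hv, if_pos ⟨hi1, by omega⟩]
        have E3 : ksApply lam j (i+1) = lam (i+1) - 2 := by rw [hv, if_pos ⟨by omega, by omega⟩]
        have E4 : ksApply lam j (i+2) = lam (i+2) - 2 := by rw [hv, if_pos ⟨by omega, by omega⟩]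
        have f1 : lam j ≤ lam (i+2) := mono_le hmono (by omega) (by omega)
        clear hv hmono
        refine ⟨by omega, by omega, by omega⟩
      · have E1 : ksApply lam j (i-1) = lam (i-1) - 2 ∨
            (lam (i-1) = 0 ∧ ksApply lam j (i-1) = 0) := by
          by_cases h1 : i = 1
          · have h2 := c3 h1
            right; exact ⟨h2, by rw [hv, if_neg (by omega)]; exact h2⟩
          · left; rw [hv, if_pos ⟨by omega, by omega⟩]
        have E2 : ksApply lam j i = lam i - 2 := by rw [hv, if_pos ⟨hi1, by omega⟩]
        have E3 : ksApply lam j (i+1) = lam (i+1) - 2 := by rw [hv, if_pos ⟨by omega, by omega⟩]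
        have E4 : ksApply lam j (i+2) = lam (i+2) := by rw [hv, if_neg (by omega)]
        have L1 : lam (i+1) = lam j := congrArg lam h
        have L2 : lam (i+2) = lam (j+1) := congrArg lam (by omega)
        clear hv hmono
        refine ⟨by omega, by omega, by omega⟩
      · have E1 : ksApply lam j (i-1) = lam (i-1) - 2 ∨
            (lam (i-1) = 0 ∧ ksApply lam j (i-1) = 0) := by
          by_cases h1 : i = 1
          · have h2 := c3 h1
            right; exact ⟨h2, by rw [hv, if_neg (by omega)]; exact h2⟩
          · left; rw [hv, if_pos ⟨by omega, by omega⟩]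
        have E2 : ksApply lam j i = lam i - 2 := by rw [hv, if_pos ⟨hi1, by omega⟩]
        have E3 : ksApply lam j (i+1) = lam (i+1) := by rw [hv, if_neg (by omega)]
        have E4 : ksApply lam j (i+2) = lam (i+2) := by rw [hv, if_neg (by omega)]
        have L1 : lam i = lam j := congrArg lam h
        have L2 : lam (i+1) = lam (j+1) := congrArg lam (by omega)
        clear hv hmono
        refine ⟨by omega, by omega, by omega⟩
      · have E1 : ksApply lam j (i-1) = lam (i-1) - 2 := by
          rw [hv, if_pos ⟨by omega, by omega⟩]
        have E2 : ksApply lam j i = lam i := by rw [hv, if_neg (by omega)]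
        have E3 : ksApply lam j (i+1) = lam (i+1) := by rw [hv, if_neg (by omega)]
        have E4 : ksApply lam j (i+2) = lam (i+2) := by rw [hv, if_neg (by omega)]
        have L1 : lam (i-1) = lam j := congrArg lam (by omega)
        have L2 : lam i = lam (j+1) := congrArg lam h
        clear hv hmono
        refine ⟨by omega, by omega, by omega⟩
      · have E1 : ksApply lam j (i-1) = lam (i-1) := by rw [hv, if_neg (by omega)]
        have E2 : ksApply lam j i = lam i := by rw [hv, if_neg (by omega)]
        have E3 : ksApply lam j (i+1) = lam (i+1) := by rw [hv, if_neg (by omega)]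
        have E4 : ksApply lam j (i+2) = lam (i+2) := by rw [hv, if_neg (by omega)]
        clear hv hmono
        refine ⟨by omega, by omega, by omega⟩
    have hΔl : IsDeltaIdx ε lam i := ⟨hi1, hp1, hp2, hABC.1, hmono i hi1, hABC.2.1⟩
    exact ⟨hΔl, fun hnb => hABC.2.2 (fun h => hnb ⟨hΔl, h⟩)⟩
  · -- Case 2
    have h2 : Case2At ε lam j := by
      rcases hmove with ⟨_, h⟩ | h
      · exact absurd h hc
      · exact h
    obtain ⟨⟨hj1', hpj1, hpj2, hnej1, hlej, hnej2⟩, heq⟩ := h2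
    have hv : ∀ m, ksApply lam j m =
        if 1 ≤ m ∧ m < j then lam m - 2
        else if m = j ∨ m = j + 1 then lam m - 1 else lam m := by
      intro m; simp [ksApply, hc, case2]
    have cm : lam (j + 2) ≤ lam (j + 1) := hmono (j + 1) (by omega)
    have haj1 : 1 ≤ lam (j + 1) := by omega
    have haj : 1 ≤ lam j := by omega
    have cj : 2 ≤ j → lam j ≤ lam (j - 1) := by
      intro h
      have h' := hmono (j - 1) (by omega)
      rwa [Nat.sub_add_cancel (by omega)] at h'
    have hbig : ∀ m, 1 ≤ m → m < j → lam j + 1 ≤ lam m := by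
      intro m h1 h2
      have h3 : lam (j - 1) ≤ lam m := mono_le hmono h1 (by omega)
      have h4 : lam j ≤ lam (j - 1) := cj (by omega)
      omega
    have hfj : ε * (-1) ^ (ksApply lam j j) = -1 → False := by
      rw [hv, if_neg (by omega), if_pos (Or.inl rfl), neg_one_pow_sub_one haj]
      intro h
      rw [mul_neg, hpj1] at h; norm_num at h
    have hfj1 : ε * (-1) ^ (ksApply lam j (j + 1)) = -1 → False := by
      rw [hv, if_neg (by omega), if_pos (Or.inr rfl), neg_one_pow_sub_one haj1]
      intro h
      rw [mul_neg, hpj2] at h; norm_num at h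
    have hni1 : i ≠ j := by intro h; exact hfj (h ▸ hp1)
    have hni2 : i ≠ j + 1 := by intro h; exact hfj1 (h ▸ hp1)
    have hni3 : i + 1 ≠ j := by intro h; exact hfj (h ▸ hp2)
    have hpar : ∀ m, m ≠ j → m ≠ j + 1 →
        ((ε * (-1) ^ (ksApply lam j m) = -1) ↔ (ε * (-1) ^ lam m = -1)) := by
      intro m hm1 hm2
      rw [hv]
      by_cases h : 1 ≤ m ∧ m < j
      · rw [if_pos h, neg_one_pow_sub_two (by have := hbig m h.1 h.2; omega)]
      · rw [if_neg h, if_neg (by omega)]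
    rw [hpar i hni1 hni2] at hp1
    rw [hpar (i + 1) hni3 (by omega)] at hp2
    have P1 : lam j % 2 = lam i % 2 := eps_mod hε hpj1 hp1
    have P2 : lam j % 2 = lam (i + 1) % 2 := eps_mod hε hpj1 hp2
    have hABC : lam (i - 1) ≠ lam i ∧ lam (i + 1) ≠ lam (i + 2) ∧
        (¬ (BadLeft lam i ∨ BadRight lam i) →
          ¬ BadLeft (ksApply lam j) i ∧ ¬ BadRight (ksApply lam j) i) := by
      simp only [BadLeft, BadRight, Nat.even_iff]
      clear hpar hp1 hp2 hmove hε hfj hfj1 hpj1 hpj2 hlej hbig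
      have hreg : i + 3 ≤ j ∨ i + 2 = j ∨ i = j + 2 ∨ j + 3 ≤ i := by omega
      rcases hreg with h | h | h | h
      · have E1 : ksApply lam j (i-1) = lam (i-1) - 2 ∨
            (lam (i-1) = 0 ∧ ksApply lam j (i-1) = 0) := by
          by_cases h1 : i = 1
          · have h2 := c3 h1
            right; exact ⟨h2, by rw [hv, if_neg (by omega), if_neg (by omega)]; exact h2⟩
          · left; rw [hv, if_pos ⟨by omega, by omega⟩]
        have E2 : ksApply lam j i = lam i - 2 := by rw [hv, if_pos ⟨hi1, by omega⟩]
        have E3 : ksApply lam j (i+1) = lam (i+1) - 2 := by rw [hv, if_pos ⟨by omega, by omega⟩]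
        have E4 : ksApply lam j (i+2) = lam (i+2) - 2 := by rw [hv, if_pos ⟨by omega, by omega⟩]
        have f0 : lam (j-1) ≤ lam (i+2) := mono_le hmono (by omega) (by omega)
        have f1 : lam j ≤ lam (j-1) := cj (by omega)
        clear hv hmono
        refine ⟨by omega, by omega, by omega⟩
      · have E1 : ksApply lam j (i-1) = lam (i-1) - 2 ∨
            (lam (i-1) = 0 ∧ ksApply lam j (i-1) = 0) := by
          by_cases h1 : i = 1
          · have h2 := c3 h1
            right; exact ⟨h2, by rw [hv, if_neg (by omega), if_neg (by omega)]; exact h2⟩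
          · left; rw [hv, if_pos ⟨by omega, by omega⟩]
        have E2 : ksApply lam j i = lam i - 2 := by rw [hv, if_pos ⟨hi1, by omega⟩]
        have E3 : ksApply lam j (i+1) = lam (i+1) - 2 := by rw [hv, if_pos ⟨by omega, by omega⟩]
        have E4 : ksApply lam j (i+2) = lam (i+2) - 1 := by
          rw [hv, if_neg (by omega), if_pos (Or.inl h)]
        have L1 : lam (i+2) = lam j := congrArg lam h
        have L2 : lam (i+1) = lam (j-1) := congrArg lam (by omega)
        have f1 : lam j ≤ lam (j-1) := cj (by omega)
        clear hv hmono
        refine ⟨by omega, by omega, by omega⟩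
      · have E1 : ksApply lam j (i-1) = lam (i-1) - 1 := by
          rw [hv, if_neg (by omega), if_pos (Or.inr (by omega))]
        have E2 : ksApply lam j i = lam i := by
          rw [hv, if_neg (by omega), if_neg (by omega)]
        have E3 : ksApply lam j (i+1) = lam (i+1) := by
          rw [hv, if_neg (by omega), if_neg (by omega)]
        have E4 : ksApply lam j (i+2) = lam (i+2) := by
          rw [hv, if_neg (by omega), if_neg (by omega)]
        have L1 : lam (i-1) = lam (j+1) := congrArg lam (by omega)
        have L2 : lam i = lam (j+2) := congrArg lam h
        clear hv hmono
        refine ⟨by omega, by omega, by omega⟩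
      · have E1 : ksApply lam j (i-1) = lam (i-1) := by
          rw [hv, if_neg (by omega), if_neg (by omega)]
        have E2 : ksApply lam j i = lam i := by
          rw [hv, if_neg (by omega), if_neg (by omega)]
        have E3 : ksApply lam j (i+1) = lam (i+1) := by
          rw [hv, if_neg (by omega), if_neg (by omega)]
        have E4 : ksApply lam j (i+2) = lam (i+2) := by
          rw [hv, if_neg (by omega), if_neg (by omega)]
        clear hv hmono
        refine ⟨by omega, by omega, by omega⟩
    have hΔl : IsDeltaIdx ε lam i := ⟨hi1, hp1, hp2, hABC.1, hmono i hi1, hABC.2.1⟩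
    exact ⟨hΔl, fun hnb => hABC.2.2 (fun h => hnb ⟨hΔl, h⟩)⟩

private lemma inv_step {ε : ℤ} {lam : ℕ → ℕ} {j : ℕ}
    (h0 : lam 0 = 0) (hmono : ∀ m, 1 ≤ m → lam (m + 1) ≤ lam m)
    (hmove : Case1At lam j ∨ Case2At ε lam j) :
    ksApply lam j 0 = 0 ∧ ∀ m, 1 ≤ m → ksApply lam j (m + 1) ≤ ksApply lam j m := by
  have hj1 : 1 ≤ j := by
    rcases hmove with ⟨h, _⟩ | ⟨⟨h, _⟩, _⟩ <;> exact h
  by_cases hc : lam (j + 1) + 2 ≤ lam j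
  · have hv : ∀ m, ksApply lam j m = if 1 ≤ m ∧ m ≤ j then lam m - 2 else lam m := by
      intro m; simp [ksApply, hc, case1]
    refine ⟨by rw [hv, if_neg (by omega)]; exact h0, fun m hm1 => ?_⟩
    have c0 : lam (m + 1) ≤ lam m := hmono m hm1
    rcases (show m + 1 ≤ j ∨ m = j ∨ j + 1 ≤ m by omega) with h | h | h
    · rw [hv (m+1), hv m, if_pos (show 1 ≤ m + 1 ∧ m + 1 ≤ j from ⟨by omega, h⟩),
        if_pos (show 1 ≤ m ∧ m ≤ j from ⟨hm1, by omega⟩)]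
      omega
    · have L1 : lam m = lam j := congrArg lam h
      have L2 : lam (m+1) = lam (j+1) := congrArg lam (by omega)
      rw [hv (m+1), hv m, if_neg (show ¬(1 ≤ m + 1 ∧ m + 1 ≤ j) by omega),
        if_pos (show 1 ≤ m ∧ m ≤ j from ⟨hm1, by omega⟩)]
      omega
    · rw [hv (m+1), hv m, if_neg (show ¬(1 ≤ m + 1 ∧ m + 1 ≤ j) by omega),
        if_neg (show ¬(1 ≤ m ∧ m ≤ j) by omega)]
      omega
  · have h2 : Case2At ε lam j := by
      rcases hmove with ⟨_, h⟩ | h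
      · exact absurd h hc
      · exact h
    obtain ⟨⟨hj1', hpj1, hpj2, hnej1, hlej, hnej2⟩, heq⟩ := h2
    have hv : ∀ m, ksApply lam j m =
        if 1 ≤ m ∧ m < j then lam m - 2
        else if m = j ∨ m = j + 1 then lam m - 1 else lam m := by
      intro m; simp [ksApply, hc, case2]
    have cm : lam (j + 2) ≤ lam (j + 1) := hmono (j + 1) (by omega)
    have haj : 1 ≤ lam j := by omega
    have cj : 2 ≤ j → lam j ≤ lam (j - 1) := by
      intro h
      have h' := hmono (j - 1) (by omega)
      rwa [Nat.sub_add_cancel (by omega)] at h'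
    refine ⟨by rw [hv, if_neg (by omega), if_neg (by omega)]; exact h0, fun m hm1 => ?_⟩
    have c0 : lam (m + 1) ≤ lam m := hmono m hm1
    rcases (show m + 2 ≤ j ∨ m + 1 = j ∨ m = j ∨ m = j + 1 ∨ j + 2 ≤ m by omega)
      with h | h | h | h | h
    · rw [hv (m+1), hv m, if_pos (show 1 ≤ m + 1 ∧ m + 1 < j from ⟨by omega, by omega⟩),
        if_pos (show 1 ≤ m ∧ m < j from ⟨hm1, by omega⟩)]
      omega
    · have L1 : lam (m+1) = lam j := congrArg lam h
      have L2 : lam m = lam (j-1) := congrArg lam (by omega)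
      have f1 : lam j ≤ lam (j-1) := cj (by omega)
      rw [hv (m+1), hv m, if_neg (show ¬(1 ≤ m + 1 ∧ m + 1 < j) by omega),
        if_pos (Or.inl h), if_pos (show 1 ≤ m ∧ m < j from ⟨hm1, by omega⟩)]
      omega
    · have L1 : lam m = lam j := congrArg lam h
      have L2 : lam (m+1) = lam (j+1) := congrArg lam (by omega)
      rw [hv (m+1), hv m, if_neg (show ¬(1 ≤ m + 1 ∧ m + 1 < j) by omega),
        if_pos (show m + 1 = j ∨ m + 1 = j + 1 from Or.inr (by omega)),
        if_neg (show ¬(1 ≤ m ∧ m < j) by omega), if_pos (Or.inl h)]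
      omega
    · have L1 : lam m = lam (j+1) := congrArg lam h
      have L2 : lam (m+1) = lam (j+2) := congrArg lam (by omega)
      rw [hv (m+1), hv m, if_neg (show ¬(1 ≤ m + 1 ∧ m + 1 < j) by omega),
        if_neg (show ¬(m + 1 = j ∨ m + 1 = j + 1) by omega),
        if_neg (show ¬(1 ≤ m ∧ m < j) by omega), if_pos (Or.inr h)]
      omega
    · rw [hv (m+1), hv m, if_neg (show ¬(1 ≤ m + 1 ∧ m + 1 < j) by omega),
        if_neg (show ¬(m + 1 = j ∨ m + 1 = j + 1) by omega),
        if_neg (show ¬(1 ≤ m ∧ m < j) by omega),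
        if_neg (show ¬(m = j ∨ m = j + 1) by omega)]
      omega

private lemma iter_key {ε : ℤ} (hε : ε = 1 ∨ ε = -1) :
    ∀ (l : List ℕ) (lam : ℕ → ℕ), lam 0 = 0 → (∀ m, 1 ≤ m → lam (m + 1) ≤ lam m) →
      AdmissibleSeq ε lam l → ∀ i, IsDeltaIdx ε (ksIter lam l) i →
      IsDeltaIdx ε lam i ∧ (¬ IsBadStep ε lam i → ¬ IsBadStep ε (ksIter lam l) i) := by
  intro l
  induction l with
  | nil => exact fun lam _ _ _ i hi => ⟨hi, fun h h' => h h'⟩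
  | cons j t ih =>
    intro lam h0 hmono hadm i hi
    obtain ⟨hmv, hadm'⟩ := hadm
    obtain ⟨h0', hmono'⟩ := inv_step (ε := ε) h0 hmono hmv
    have hks : ksIter lam (j :: t) = ksIter (ksApply lam j) t := rfl
    rw [hks] at hi
    obtain ⟨hΔμ, himp⟩ := ih (ksApply lam j) h0' hmono' hadm' i hi
    obtain ⟨hΔl, himp'⟩ := key_step hε h0 hmono hmv i hΔμ
    refine ⟨hΔl, fun hnb => ?_⟩
    have hgood := himp' hnb
    have hnbμ : ¬ IsBadStep ε (ksApply lam j) i := by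
      rintro ⟨_, hL | hR⟩
      · exact hgood.1 hL
      · exact hgood.2 hR
    rw [hks]
    exact himp hnbμ

/-- Good 2-steps are preserved by the KS algorithm: if `(i, i+1)` is a good 2-step
of `λ ∈ P_ε(N)` and `𝐢` is an admissible sequence with `i ∈ Δ(λ^𝐢)`, then
`(i, i+1)` is a good 2-step of `λ^𝐢`.  Consequently, if `λ` is non-singular then
so is `λ^𝐢` for every admissible sequence `𝐢`. -/
theorem good_step_inherited_and_nonsingular_inherited
    (ε : ℤ) (hε : ε = 1 ∨ ε = -1) (N n : ℕ)
    (lam : ℕ → ℕ) (hpart : IsPartitionEps ε N n lam) :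
    (∀ (l : List ℕ) (i : ℕ), AdmissibleSeq ε lam l → IsGoodStep ε lam i →
        IsDeltaIdx ε (ksIter lam l) i → IsGoodStep ε (ksIter lam l) i) ∧
      (NonSingular ε lam →
        ∀ l : List ℕ, AdmissibleSeq ε lam l → NonSingular ε (ksIter lam l)) := by
  obtain ⟨h0, hpos, hz, hmono, hsum, hmult⟩ := hpart
  constructor
  · intro l i hadm hgood hΔ
    obtain ⟨hΔ0, hL, hR⟩ := hgood
    obtain ⟨hΔl, himp⟩ := iter_key hε l lam h0 hmono hadm i hΔ
    have hnb : ¬ IsBadStep ε lam i := by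
      rintro ⟨_, h | h⟩
      · exact hL h
      · exact hR h
    have hnb' := himp hnb
    exact ⟨hΔ, fun h => hnb' ⟨hΔ, Or.inl h⟩, fun h => hnb' ⟨hΔ, Or.inr h⟩⟩
  · intro hns l hadm i hb
    obtain ⟨hΔμ, hLR⟩ := hb
    obtain ⟨hΔl, himp⟩ := iter_key hε l lam h0 hmono hadm i hΔμ
    exact himp (hns i) ⟨hΔμ, hLR⟩
end

section
/- For any λ ∈ P_ε(N): c(λ) ≥ z(λ), and c(λ) = z(λ) if and only if λ is non-singular (has no bad 2-steps), where c(λ) = s(λ) + |Δ(λ)| and z(λ) = s(λ) + |Δ(λ)| - (|Δ_bad(λ)| - |Σ(λ)|). -/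
section Aux

variable {ε : ℤ} {N n : ℕ} {lam : ℕ → ℕ}

lemma parity_iff (hε : ε = 1 ∨ ε = -1) {a b : ℕ}
    (ha : ε * (-1) ^ a = -1) (hb : ε * (-1) ^ b = -1) : Even a ↔ Even b := by
  have hε2 : ε * ε = 1 := by rcases hε with rfl | rfl <;> norm_num
  have h : ((-1 : ℤ)) ^ a = (-1) ^ b := by
    calc ((-1 : ℤ)) ^ a = ε * (ε * (-1) ^ a) := by rw [← mul_assoc, hε2, one_mul]
      _ = ε * (ε * (-1) ^ b) := by rw [ha, hb]
      _ = (-1) ^ b := by rw [← mul_assoc, hε2, one_mul]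
  rcases Nat.even_or_odd a with h1 | h1 <;> rcases Nat.even_or_odd b with h2 | h2
  · exact iff_of_true h1 h2
  · rw [h1.neg_one_pow, h2.neg_one_pow] at h; norm_num at h
  · rw [h1.neg_one_pow, h2.neg_one_pow] at h; norm_num at h
  · exact iff_of_false (Nat.not_even_iff_odd.mpr h1) (Nat.not_even_iff_odd.mpr h2)

/-- Adjacent 2-steps force bad boundaries in between. -/
lemma adj_bad (hε : ε = 1 ∨ ε = -1) (hpart : IsPartitionEps ε N n lam) {i : ℕ}
    (hi : IsDeltaIdx ε lam i) (hi2 : IsDeltaIdx ε lam (i + 2)) :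
    BadRight lam i ∧ BadLeft lam (i + 2) := by
  have hle : lam (i + 2) ≤ lam (i + 1) := hpart.2.2.2.1 (i + 1) (by omega)
  have hne : lam (i + 1) ≠ lam (i + 2) := hi.2.2.2.2.2
  have hpos : 0 < lam (i + 1) - lam (i + 2) := by omega
  have hev : Even (lam (i + 1) - lam (i + 2)) :=
    (Nat.even_sub hle).mpr (parity_iff hε hi.2.2.1 hi2.2.1)
  refine ⟨⟨hpos, hev⟩, ?_⟩
  have h21 : i + 2 - 1 = i + 1 := by omega
  exact ⟨by rw [h21]; exact hpos, by rw [h21]; exact hev⟩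

/-- Any 2-step index is at most `n`. -/
lemma delta_le_n (hpart : IsPartitionEps ε N n lam) {i : ℕ}
    (hi : IsDeltaIdx ε lam i) : i ≤ n := by
  by_contra h
  have h1 : lam (i + 1) = 0 := hpart.2.2.1 _ (by omega)
  have h2 : lam (i + 2) = 0 := hpart.2.2.1 _ (by omega)
  exact hi.2.2.2.2.2 (h1.trans h2.symm)

lemma cluster_delta {i k : ℕ} (h : IsGoodCluster ε lam i k) :
    IsDeltaIdx ε lam i ∧ IsDeltaIdx ε lam (i + 2) := by
  have hk : 2 ≤ k := h.1
  have h0 := h.2.1 0 (by omega)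
  have h1 := h.2.1 1 (by omega)
  constructor
  · simpa using h0
  · simpa using h1

lemma cluster_bad (hε : ε = 1 ∨ ε = -1) (hpart : IsPartitionEps ε N n lam)
    {i k : ℕ} (h : IsGoodCluster ε lam i k) :
    IsBadStep ε lam i ∧ IsBadStep ε lam (i + 2) := by
  obtain ⟨hd0, hd2⟩ := cluster_delta h
  obtain ⟨hr, hl⟩ := adj_bad hε hpart hd0 hd2
  exact ⟨⟨hd0, Or.inr hr⟩, ⟨hd2, Or.inl hl⟩⟩

lemma cluster_not_lt (hε : ε = 1 ∨ ε = -1) (hpart : IsPartitionEps ε N n lam)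
    {i k k' : ℕ} (h : IsGoodCluster ε lam i k) (h' : IsGoodCluster ε lam i k')
    (hkk : k < k') : False := by
  have hk2 : 2 ≤ k := h.1
  have hd1 : IsDeltaIdx ε lam (i + 2 * (k - 1)) := h'.2.1 (k - 1) (by omega)
  have hd2 : IsDeltaIdx ε lam (i + 2 * (k - 1) + 2) := by
    have := h'.2.1 k (by omega)
    have he : i + 2 * k = i + 2 * (k - 1) + 2 := by omega
    rwa [he] at this
  exact h.2.2.2 (adj_bad hε hpart hd1 hd2).1

lemma cluster_k_unique (hε : ε = 1 ∨ ε = -1) (hpart : IsPartitionEps ε N n lam)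
    {i k k' : ℕ} (h : IsGoodCluster ε lam i k) (h' : IsGoodCluster ε lam i k') :
    k = k' := by
  rcases lt_trichotomy k k' with hlt | heq | hlt
  · exact absurd (cluster_not_lt hε hpart h h' hlt) (not_false)
  · exact heq
  · exact absurd (cluster_not_lt hε hpart h' h hlt) (not_false)

lemma cluster_not_adj (hε : ε = 1 ∨ ε = -1) (hpart : IsPartitionEps ε N n lam)
    {i k k' : ℕ} (h : IsGoodCluster ε lam i k) (h' : IsGoodCluster ε lam (i + 2) k') :
    False := by
  obtain ⟨hd0, hd2⟩ := cluster_delta h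
  exact h'.2.2.1 (adj_bad hε hpart hd0 hd2).2

end Aux

/-- For any `λ ∈ P_ε(N)`: `c(λ) ≥ z(λ)`, and `c(λ) = z(λ)` iff `λ` is
non-singular (has no bad 2-steps), where `c(λ) = s(λ) + |Δ(λ)|` and
`z(λ) = s(λ) + |Δ(λ)| - (|Δ_bad(λ)| - |Σ(λ)|)`. -/
theorem c_ge_z_and_eq_iff_nonsingular (ε : ℤ) (hε : ε = 1 ∨ ε = -1) (N n : ℕ)
    (lam : ℕ → ℕ) (hpart : IsPartitionEps ε N n lam) :
    zInt ε n lam ≤ cInt ε n lam ∧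
      (cInt ε n lam = zInt ε n lam ↔ NonSingular ε lam) := by
  classical
  set B := (Finset.Icc 1 n).filter (IsBadStep ε lam) with hB
  set G := (Finset.Icc 1 n ×ˢ Finset.Icc 2 n).filter
      (fun p => IsGoodCluster ε lam p.1 p.2) with hG
  have hmemG : ∀ p : ℕ × ℕ, p ∈ G → IsGoodCluster ε lam p.1 p.2 := by
    intro p hp; exact (Finset.mem_filter.mp hp).2
  have key : 2 * G.card ≤ B.card := by
    set S1 := G.image Prod.fst with hS1
    set S2 := G.image (fun p => p.1 + 2) with hS2
    have hc1 : S1.card = G.card := by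
      apply Finset.card_image_of_injOn
      intro p hp q hq hpq
      have := cluster_k_unique hε hpart (hpq ▸ hmemG p hp) (hmemG q hq)
      exact Prod.ext hpq this
    have hc2 : S2.card = G.card := by
      apply Finset.card_image_of_injOn
      intro p hp q hq hpq
      have hpq' : p.1 = q.1 := by simpa using hpq
      have := cluster_k_unique hε hpart (hpq' ▸ hmemG p hp) (hmemG q hq)
      exact Prod.ext hpq' this
    have hsub : S1 ∪ S2 ⊆ B := by
      intro x hx
      rcases Finset.mem_union.mp hx with hx | hx
      · obtain ⟨p, hp, rfl⟩ := Finset.mem_image.mp hx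
        have hcl := hmemG p hp
        have hmem := (Finset.mem_product.mp (Finset.mem_filter.mp hp).1).1
        exact Finset.mem_filter.mpr ⟨hmem, (cluster_bad hε hpart hcl).1⟩
      · obtain ⟨p, hp, rfl⟩ := Finset.mem_image.mp hx
        have hcl := hmemG p hp
        have hd := (cluster_delta hcl).2
        have hle := delta_le_n hpart hd
        exact Finset.mem_filter.mpr ⟨Finset.mem_Icc.mpr ⟨by omega, hle⟩,
          (cluster_bad hε hpart hcl).2⟩
    have hdisj : Disjoint S1 S2 := by
      rw [Finset.disjoint_left]
      intro x hx1 hx2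
      obtain ⟨p, hp, hpx⟩ := Finset.mem_image.mp hx1
      obtain ⟨q, hq, hqx⟩ := Finset.mem_image.mp hx2
      have hcp := hmemG p hp
      have hcq := hmemG q hq
      have : p.1 = q.1 + 2 := by omega
      exact cluster_not_adj hε hpart hcq (this ▸ hcp)
    calc 2 * G.card = S1.card + S2.card := by rw [hc1, hc2]; ring
      _ = (S1 ∪ S2).card := (Finset.card_union_of_disjoint hdisj).symm
      _ ≤ B.card := Finset.card_le_card hsub
  have hBcard : badCard ε n lam = B.card := rfl
  have hGcard : goodClusterCard ε n lam = G.card := rfl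
  have hns_of : B.card = 0 → NonSingular ε lam := by
    intro h0 i hbad
    have h1 : 1 ≤ i := hbad.1.1
    have h2 : i ≤ n := delta_le_n hpart hbad.1
    have : i ∈ B := Finset.mem_filter.mpr ⟨Finset.mem_Icc.mpr ⟨h1, h2⟩, hbad⟩
    exact absurd (Finset.card_eq_zero.mp h0 ▸ this) (Finset.notMem_empty i)
  constructor
  · unfold zInt cInt
    have : goodClusterCard ε n lam ≤ badCard ε n lam := by
      rw [hBcard, hGcard]; omega
    push_cast
    omega
  · constructor
    · intro heq
      have heq2 : badCard ε n lam = goodClusterCard ε n lam := by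
        unfold zInt cInt at heq
        omega
      rw [hBcard, hGcard] at heq2
      exact hns_of (by omega)
    · intro hns
      have hB0 : B = ∅ := by
        rw [Finset.eq_empty_iff_forall_notMem]
        intro i hi
        exact hns i (Finset.mem_filter.mp hi).2
      have hG0 : G = ∅ := by
        rw [Finset.eq_empty_iff_forall_notMem]
        intro p hp
        exact hns p.1 (cluster_bad hε hpart (hmemG p hp)).1
      unfold zInt cInt
      rw [hBcard, hGcard, hB0, hG0]
      simp
end

section
/- Let λ ∈ P_ε(N) be non-singular. Then any two maximal admissible sequences for λ in the Kempken-Spaltenstein algorithm have the same length and are conjugate under a permutation; that is, after sorting in non-decreasing order, they are equal. -/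
/-! ### Auxiliary machinery for the proof -/

section KSAux

private lemma negOnePow_mod (x : ℕ) : ((-1:ℤ))^x = (-1)^(x % 2) := by
  conv_lhs => rw [← Nat.mod_add_div x 2]
  rw [pow_add, pow_mul, neg_one_sq, one_pow, mul_one]

private lemma P_sub_two (ε : ℤ) {x : ℕ} (h : 2 ≤ x) :
    ε * (-1:ℤ)^(x-2) = ε * (-1:ℤ)^x := by
  rw [negOnePow_mod (x-2), negOnePow_mod x]
  congr 2
  omega

private lemma P_flip_ne (ε : ℤ) {x y : ℕ} (h : x % 2 ≠ y % 2)
    (hx : ε * (-1:ℤ)^x = -1) : ε * (-1:ℤ)^y ≠ -1 := by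
  intro hy
  rw [negOnePow_mod x] at hx
  rw [negOnePow_mod y] at hy
  rcases Nat.mod_two_eq_zero_or_one x with hx2 | hx2 <;>
    rcases Nat.mod_two_eq_zero_or_one y with hy2 | hy2 <;>
      rw [hx2] at hx <;> rw [hy2] at hy <;> norm_num at hx hy <;> omega

private lemma P_mod_eq (ε : ℤ) {x y : ℕ} (hx : ε * (-1:ℤ)^x = -1)
    (hy : ε * (-1:ℤ)^y = -1) : x % 2 = y % 2 := by
  by_contra h
  exact P_flip_ne ε h hx hy

private lemma badL_iff (lam : ℕ → ℕ) (j : ℕ) :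
    BadLeft lam j ↔ (0 < lam (j-1) - lam j ∧ (lam (j-1) - lam j) % 2 = 0) := by
  unfold BadLeft; rw [Nat.even_iff]

private lemma badR_iff (lam : ℕ → ℕ) (j : ℕ) :
    BadRight lam j ↔ (0 < lam (j+1) - lam (j+2) ∧ (lam (j+1) - lam (j+2)) % 2 = 0) := by
  unfold BadRight; rw [Nat.even_iff]

private def Good (ε : ℤ) (lam : ℕ → ℕ) : Prop :=
  lam 0 = 0 ∧ (∀ j, 1 ≤ j → lam (j + 1) ≤ lam j) ∧ NonSingular ε lam

private lemma mono_of {lam : ℕ → ℕ} (hm : ∀ j, 1 ≤ j → lam (j + 1) ≤ lam j) :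
    ∀ a b : ℕ, 1 ≤ a → a ≤ b → lam b ≤ lam a := by
  intro a b ha hab
  induction hab with
  | refl => exact le_rfl
  | @step m h ih => exact le_trans (hm m (le_trans ha h)) ih

private lemma c1_in (lam : ℕ → ℕ) {i j : ℕ} (h1 : 1 ≤ j) (h2 : j ≤ i) :
    case1 lam i j = lam j - 2 := by
  simp only [case1]; rw [if_pos ⟨h1, h2⟩]

private lemma c1_out (lam : ℕ → ℕ) {i j : ℕ} (h : ¬ (1 ≤ j ∧ j ≤ i)) :
    case1 lam i j = lam j := by
  simp only [case1]; rw [if_neg h]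

private lemma c2_lt (lam : ℕ → ℕ) {i j : ℕ} (h1 : 1 ≤ j) (h2 : j < i) :
    case2 lam i j = lam j - 2 := by
  simp only [case2]; rw [if_pos ⟨h1, h2⟩]

private lemma c2_eq (lam : ℕ → ℕ) {i j : ℕ} (hi : 1 ≤ i) (h : j = i ∨ j = i + 1) :
    case2 lam i j = lam j - 1 := by
  simp only [case2]; rw [if_neg (by omega), if_pos h]

private lemma c2_out (lam : ℕ → ℕ) {i j : ℕ} (h1 : ¬ (1 ≤ j ∧ j < i))
    (h2 : ¬ (j = i ∨ j = i + 1)) : case2 lam i j = lam j := by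
  simp only [case2]; rw [if_neg h1, if_neg h2]

private lemma ks_eq1 {lam : ℕ → ℕ} {i : ℕ} (h : lam (i+1) + 2 ≤ lam i) :
    ksApply lam i = case1 lam i := by
  unfold ksApply; rw [if_pos h]

private lemma ks_eq2 {lam : ℕ → ℕ} {i : ℕ} (h : ¬ (lam (i+1) + 2 ≤ lam i)) :
    ksApply lam i = case2 lam i := by
  unfold ksApply; rw [if_neg h]

private lemma case2_facts (ε : ℤ) {lam : ℕ → ℕ} (hG : Good ε lam) {i : ℕ}
    (h : Case2At ε lam i) :
    1 ≤ i ∧ lam i = lam (i+1) ∧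
      lam (i+2) < lam (i+1) ∧ (lam (i+1) - lam (i+2)) % 2 = 1 ∧
      (2 ≤ i → lam i < lam (i-1) ∧ (lam (i-1) - lam i) % 2 = 1) := by
  obtain ⟨hz, hm, hns⟩ := hG
  have hΔ := h.1
  have heq := h.2
  obtain ⟨hi, hp1, hp2, hne1, hle, hne2⟩ := h.1
  have hnb : ¬ (BadLeft lam i ∨ BadRight lam i) := fun hb => hns i ⟨hΔ, hb⟩
  rw [badL_iff, badR_iff] at hnb
  have h1 : lam (i+2) ≤ lam (i+1) := hm (i+1) (by omega)
  refine ⟨hi, heq, by omega, by omega, fun h2 => ?_⟩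
  have h3 : lam i ≤ lam (i-1) := by
    have h' := hm (i-1) (by omega)
    have nb : i - 1 + 1 = i := by omega
    rw [nb] at h'
    exact h'
  exact ⟨by omega, by omega⟩

private lemma ns_case1 (ε : ℤ) {lam : ℕ → ℕ} (hG : Good ε lam) {i : ℕ}
    (hi : 1 ≤ i) (hc : lam (i+1) + 2 ≤ lam i) :
    NonSingular ε (case1 lam i) := by
  obtain ⟨hz, hm, hns⟩ := hG
  have hmono := mono_of hm
  intro j hb
  obtain ⟨⟨hj, hp1, hp2, hne1, hle, hne2⟩, hbad⟩ := hb
  have h2i : 2 ≤ lam i := by omega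
  have hbig : ∀ x, 1 ≤ x → x ≤ i → 2 ≤ lam x := fun x hx hxi =>
    le_trans h2i (hmono x i hx hxi)
  have e0 : ∀ x : ℕ, 1 ≤ x → x ≤ i →
      ((x = 1 ∧ case1 lam i (x-1) = 0 ∧ lam (x-1) = 0) ∨
       (2 ≤ x ∧ case1 lam i (x-1) = lam (x-1) - 2 ∧ 2 ≤ lam (x-1))) := by
    intro x hx hxi
    rcases (by omega : x = 1 ∨ 2 ≤ x) with h | h
    · subst h
      exact Or.inl ⟨rfl, (c1_out lam (by omega)).trans hz, hz⟩
    · exact Or.inr ⟨h, c1_in lam (by omega) (by omega), hbig (x-1) (by omega) (by omega)⟩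
  rcases (by omega : j + 2 ≤ i ∨ j + 1 = i ∨ j = i ∨ j = i + 1 ∨ i + 2 ≤ j)
    with hr | hr | hr | hr | hr
  · -- j + 2 ≤ i
    have d0 := e0 j hj (by omega)
    have e1 : case1 lam i j = lam j - 2 := c1_in lam hj (by omega)
    have e2 : case1 lam i (j+1) = lam (j+1) - 2 := c1_in lam (by omega) (by omega)
    have e3 : case1 lam i (j+2) = lam (j+2) - 2 := c1_in lam (by omega) (by omega)
    have b1 := hbig j hj (by omega)
    have b2 := hbig (j+1) (by omega) (by omega)
    have b3 := hbig (j+2) (by omega) (by omega)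
    rw [e1, P_sub_two ε b1] at hp1
    rw [e2, P_sub_two ε b2] at hp2
    refine hns j ⟨⟨hj, hp1, hp2, by omega, hm j hj, by omega⟩, ?_⟩
    rcases hbad with hbl | hbr
    · rw [badL_iff] at hbl; exact Or.inl (by rw [badL_iff]; omega)
    · rw [badR_iff] at hbr; exact Or.inr (by rw [badR_iff]; omega)
  · -- j + 1 = i
    obtain rfl : i = j + 1 := by omega
    have n1 : lam (j+1+1) = lam (j+2) := rfl
    have d0 := e0 j hj (by omega)
    have e1 : case1 lam (j+1) j = lam j - 2 := c1_in lam hj (by omega)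
    have e2 : case1 lam (j+1) (j+1) = lam (j+1) - 2 := c1_in lam (by omega) (by omega)
    have e3 : case1 lam (j+1) (j+2) = lam (j+2) := c1_out lam (by omega)
    have b1 := hbig j hj (by omega)
    have b2 := hbig (j+1) (by omega) (by omega)
    rw [e1, P_sub_two ε b1] at hp1
    rw [e2, P_sub_two ε b2] at hp2
    refine hns j ⟨⟨hj, hp1, hp2, by omega, hm j hj, by omega⟩, ?_⟩
    rcases hbad with hbl | hbr
    · rw [badL_iff] at hbl; exact Or.inl (by rw [badL_iff]; omega)
    · rw [badR_iff] at hbr; exact Or.inr (by rw [badR_iff]; omega)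
  · -- j = i
    obtain rfl : i = j := hr.symm
    have d0 := e0 i hi le_rfl
    have e1 : case1 lam i i = lam i - 2 := c1_in lam hi le_rfl
    have e2 : case1 lam i (i+1) = lam (i+1) := c1_out lam (by omega)
    have e3 : case1 lam i (i+2) = lam (i+2) := c1_out lam (by omega)
    rw [e1, P_sub_two ε h2i] at hp1
    rw [e2] at hp2
    refine hns i ⟨⟨hi, hp1, hp2, by omega, hm i hi, by omega⟩, ?_⟩
    rcases hbad with hbl | hbr
    · rw [badL_iff] at hbl; exact Or.inl (by rw [badL_iff]; omega)
    · rw [badR_iff] at hbr; exact Or.inr (by rw [badR_iff]; omega)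
  · -- j = i + 1
    subst hr
    have n0 : case1 lam i (i+1-1) = case1 lam i i := rfl
    have n1 : lam (i+1-1) = lam i := rfl
    have e0' : case1 lam i i = lam i - 2 := c1_in lam hi le_rfl
    have e1 : case1 lam i (i+1) = lam (i+1) := c1_out lam (by omega)
    have e2 : case1 lam i (i+1+1) = lam (i+1+1) := c1_out lam (by omega)
    have e3 : case1 lam i (i+1+2) = lam (i+1+2) := c1_out lam (by omega)
    rw [e1] at hp1
    rw [e2] at hp2
    refine hns (i+1) ⟨⟨by omega, hp1, hp2, by omega, hm (i+1) (by omega), by omega⟩, ?_⟩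
    rcases hbad with hbl | hbr
    · rw [badL_iff] at hbl; exact Or.inl (by rw [badL_iff]; omega)
    · rw [badR_iff] at hbr; exact Or.inr (by rw [badR_iff]; omega)
  · -- i + 2 ≤ j
    have e0' : case1 lam i (j-1) = lam (j-1) := c1_out lam (by omega)
    have e1 : case1 lam i j = lam j := c1_out lam (by omega)
    have e2 : case1 lam i (j+1) = lam (j+1) := c1_out lam (by omega)
    have e3 : case1 lam i (j+2) = lam (j+2) := c1_out lam (by omega)
    rw [e1] at hp1
    rw [e2] at hp2
    refine hns j ⟨⟨hj, hp1, hp2, by omega, hm j hj, by omega⟩, ?_⟩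
    rcases hbad with hbl | hbr
    · rw [badL_iff] at hbl; exact Or.inl (by rw [badL_iff]; omega)
    · rw [badR_iff] at hbr; exact Or.inr (by rw [badR_iff]; omega)

private lemma ns_case2 (ε : ℤ) {lam : ℕ → ℕ} (hG : Good ε lam) {i : ℕ}
    (hc : Case2At ε lam i) : NonSingular ε (case2 lam i) := by
  obtain ⟨hz, hm, hns⟩ := hG
  have hmono := mono_of hm
  obtain ⟨hi, heq, hr1, hr2, hlf⟩ := case2_facts ε ⟨hz, hm, hns⟩ hc
  obtain ⟨-, hpa, hpb, hne1a, -, hne2a⟩ := hc.1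
  intro j hb
  obtain ⟨⟨hj, hp1, hp2, hne1, hle, hne2⟩, hbad⟩ := hb
  have hbig : ∀ x, 1 ≤ x → x + 1 ≤ i → 2 ≤ lam x := by
    intro x hx hxi
    have h1 := hmono x (i-1) hx (by omega)
    have h2 := hlf (by omega)
    omega
  rcases (by omega : j + 3 ≤ i ∨ j + 2 = i ∨ j + 1 = i ∨ j = i ∨ j = i + 1 ∨ j = i + 2 ∨ i + 3 ≤ j)
    with hr | hr | hr | hr | hr | hr | hr
  · -- j + 3 ≤ i
    have d0 : (j = 1 ∧ case2 lam i (j-1) = 0 ∧ lam (j-1) = 0) ∨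
        (2 ≤ j ∧ case2 lam i (j-1) = lam (j-1) - 2 ∧ 2 ≤ lam (j-1)) := by
      rcases (by omega : j = 1 ∨ 2 ≤ j) with h | h
      · subst h
        exact Or.inl ⟨rfl, (c2_out lam (by omega) (by omega)).trans hz, hz⟩
      · exact Or.inr ⟨h, c2_lt lam (by omega) (by omega), hbig (j-1) (by omega) (by omega)⟩
    have e1 : case2 lam i j = lam j - 2 := c2_lt lam hj (by omega)
    have e2 : case2 lam i (j+1) = lam (j+1) - 2 := c2_lt lam (by omega) (by omega)
    have e3 : case2 lam i (j+2) = lam (j+2) - 2 := c2_lt lam (by omega) (by omega)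
    have b1 := hbig j hj (by omega)
    have b2 := hbig (j+1) (by omega) (by omega)
    have b3 := hbig (j+2) (by omega) (by omega)
    rw [e1, P_sub_two ε b1] at hp1
    rw [e2, P_sub_two ε b2] at hp2
    refine hns j ⟨⟨hj, hp1, hp2, by omega, hm j hj, by omega⟩, ?_⟩
    rcases hbad with hbl | hbr
    · rw [badL_iff] at hbl; exact Or.inl (by rw [badL_iff]; omega)
    · rw [badR_iff] at hbr; exact Or.inr (by rw [badR_iff]; omega)
  · -- j + 2 = i : parity contradiction on the left boundary of i
    obtain rfl : i = j + 2 := by omega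
    have e2 : case2 lam (j+2) (j+1) = lam (j+1) - 2 := c2_lt lam (by omega) (by omega)
    have b2 : 2 ≤ lam (j+1) := hbig (j+1) (by omega) (by omega)
    rw [e2, P_sub_two ε b2] at hp2
    have h2 := hlf (by omega)
    have n1 : lam (j+2-1) = lam (j+1) := rfl
    exact absurd hpa (P_flip_ne ε (by omega) hp2)
  · -- j + 1 = i
    obtain rfl : i = j + 1 := by omega
    have e2 : case2 lam (j+1) (j+1) = lam (j+1) - 1 := c2_eq lam (by omega) (Or.inl rfl)
    rw [e2] at hp2
    have hpos : 1 ≤ lam (j+1) := by omega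
    exact absurd hp2 (P_flip_ne ε (by omega) hpa)
  · -- j = i
    obtain rfl : i = j := hr.symm
    have e1 : case2 lam i i = lam i - 1 := c2_eq lam hi (Or.inl rfl)
    rw [e1] at hp1
    have hpos : 1 ≤ lam i := by omega
    exact absurd hp1 (P_flip_ne ε (by omega) hpa)
  · -- j = i + 1
    subst hr
    have e1 : case2 lam i (i+1) = lam (i+1) - 1 := c2_eq lam hi (Or.inr rfl)
    rw [e1] at hp1
    have hpos : 1 ≤ lam (i+1) := by omega
    exact absurd hp1 (P_flip_ne ε (by omega) hpb)
  · -- j = i + 2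
    subst hr
    have e1 : case2 lam i (i+2) = lam (i+2) := c2_out lam (by omega) (by omega)
    rw [e1] at hp1
    exact absurd hp1 (P_flip_ne ε (by omega) hpb)
  · -- i + 3 ≤ j
    have e0' : case2 lam i (j-1) = lam (j-1) := c2_out lam (by omega) (by omega)
    have e1 : case2 lam i j = lam j := c2_out lam (by omega) (by omega)
    have e2 : case2 lam i (j+1) = lam (j+1) := c2_out lam (by omega) (by omega)
    have e3 : case2 lam i (j+2) = lam (j+2) := c2_out lam (by omega) (by omega)
    rw [e1] at hp1
    rw [e2] at hp2
    refine hns j ⟨⟨hj, hp1, hp2, by omega, hm j hj, by omega⟩, ?_⟩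
    rcases hbad with hbl | hbr
    · rw [badL_iff] at hbl; exact Or.inl (by rw [badL_iff]; omega)
    · rw [badR_iff] at hbr; exact Or.inr (by rw [badR_iff]; omega)

private lemma good_case1 (ε : ℤ) {lam : ℕ → ℕ} (hG : Good ε lam) {i : ℕ}
    (hi : 1 ≤ i) (hc : lam (i+1) + 2 ≤ lam i) : Good ε (case1 lam i) := by
  obtain ⟨hz, hm, hns⟩ := hG
  refine ⟨(c1_out lam (by omega)).trans hz, ?_, ns_case1 ε ⟨hz, hm, hns⟩ hi hc⟩
  intro j hj
  have hmj := hm j hj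
  rcases (by omega : j + 1 ≤ i ∨ j = i ∨ i + 1 ≤ j) with h | h | h
  · have e1 : case1 lam i j = lam j - 2 := c1_in lam hj (by omega)
    have e2 : case1 lam i (j+1) = lam (j+1) - 2 := c1_in lam (by omega) (by omega)
    omega
  · obtain rfl : i = j := h.symm
    have e1 : case1 lam i i = lam i - 2 := c1_in lam hj le_rfl
    have e2 : case1 lam i (i+1) = lam (i+1) := c1_out lam (by omega)
    omega
  · have e1 : case1 lam i j = lam j := c1_out lam (by omega)
    have e2 : case1 lam i (j+1) = lam (j+1) := c1_out lam (by omega)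
    omega

private lemma good_case2 (ε : ℤ) {lam : ℕ → ℕ} (hG : Good ε lam) {i : ℕ}
    (hc : Case2At ε lam i) : Good ε (case2 lam i) := by
  obtain ⟨hz, hm, hns⟩ := hG
  obtain ⟨hi, heq, hr1, hr2, hlf⟩ := case2_facts ε ⟨hz, hm, hns⟩ hc
  refine ⟨(c2_out lam (by omega) (by omega)).trans hz, ?_, ns_case2 ε ⟨hz, hm, hns⟩ hc⟩
  intro j hj
  have hmj := hm j hj
  rcases (by omega : j + 2 ≤ i ∨ j + 1 = i ∨ j = i ∨ j = i + 1 ∨ i + 2 ≤ j) with h|h|h|h|h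
  · have e1 : case2 lam i j = lam j - 2 := c2_lt lam hj (by omega)
    have e2 : case2 lam i (j+1) = lam (j+1) - 2 := c2_lt lam (by omega) (by omega)
    omega
  · obtain rfl : i = j + 1 := by omega
    have e1 : case2 lam (j+1) j = lam j - 2 := c2_lt lam hj (by omega)
    have e2 : case2 lam (j+1) (j+1) = lam (j+1) - 1 := c2_eq lam (by omega) (Or.inl rfl)
    have h2 := hlf (by omega)
    have n1 : lam (j+1-1) = lam j := rfl
    omega
  · subst h
    have e1 : case2 lam j j = lam j - 1 := c2_eq lam (by omega) (Or.inl rfl)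
    have e2 : case2 lam j (j+1) = lam (j+1) - 1 := c2_eq lam (by omega) (Or.inr rfl)
    omega
  · subst h
    have e1 : case2 lam i (i+1) = lam (i+1) - 1 := c2_eq lam hi (Or.inr rfl)
    have e2 : case2 lam i (i+1+1) = lam (i+1+1) := c2_out lam (by omega) (by omega)
    have n1 : lam (i+1+1) = lam (i+2) := rfl
    omega
  · have e1 : case2 lam i j = lam j := c2_out lam (by omega) (by omega)
    have e2 : case2 lam i (j+1) = lam (j+1) := c2_out lam (by omega) (by omega)
    omega

private lemma good_step (ε : ℤ) {lam : ℕ → ℕ} (hG : Good ε lam) {i : ℕ}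
    (hs : Case1At lam i ∨ Case2At ε lam i) : Good ε (ksApply lam i) := by
  rcases hs with ⟨hi, hc⟩ | hc
  · rw [ks_eq1 hc]; exact good_case1 ε hG hi hc
  · rw [ks_eq2 (by have := hc.2; omega)]; exact good_case2 ε hG hc

private lemma step_dec (ε : ℤ) {lam : ℕ → ℕ} (hG : Good ε lam) {i : ℕ}
    (hs : Case1At lam i ∨ Case2At ε lam i) : ksApply lam i 1 < lam 1 := by
  obtain ⟨hz, hm, hns⟩ := hG
  have hmono := mono_of hm
  rcases hs with ⟨hi, hc⟩ | hc
  · rw [ks_eq1 hc]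
    have e1 : case1 lam i 1 = lam 1 - 2 := c1_in lam le_rfl hi
    have h2 : lam i ≤ lam 1 := hmono 1 i le_rfl hi
    omega
  · obtain ⟨hi, heq, hr1, hr2, hlf⟩ := case2_facts ε ⟨hz, hm, hns⟩ hc
    rw [ks_eq2 (by omega)]
    rcases (by omega : i = 1 ∨ 2 ≤ i) with h | h
    · subst h
      have e1 : case2 lam 1 1 = lam 1 - 1 := c2_eq lam le_rfl (Or.inl rfl)
      omega
    · have e1 : case2 lam i 1 = lam 1 - 2 := c2_lt lam le_rfl (by omega)
      have h2 := hlf h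
      have h3 : lam (i-1) ≤ lam 1 := hmono 1 (i-1) le_rfl (by omega)
      omega

private lemma step_pos (ε : ℤ) {lam : ℕ → ℕ} (hG : Good ε lam) {i : ℕ}
    (hs : Case1At lam i ∨ Case2At ε lam i) : 1 ≤ lam 1 := by
  obtain ⟨hz, hm, hns⟩ := hG
  have hmono := mono_of hm
  rcases hs with ⟨hi, hc⟩ | hc
  · have h2 : lam i ≤ lam 1 := hmono 1 i le_rfl hi
    omega
  · obtain ⟨hi, heq, hr1, -, -⟩ := case2_facts ε ⟨hz, hm, hns⟩ hc
    have h2 : lam i ≤ lam 1 := hmono 1 i le_rfl hi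
    omega

end KSAux

section KSAux2

private lemma comm_lt (ε : ℤ) {lam : ℕ → ℕ} (hG : Good ε lam) {a b : ℕ} (hab : a < b)
    (ha : Case1At lam a ∨ Case2At ε lam a) (hb : Case1At lam b ∨ Case2At ε lam b) :
    (Case1At (ksApply lam a) b ∨ Case2At ε (ksApply lam a) b) ∧
    (Case1At (ksApply lam b) a ∨ Case2At ε (ksApply lam b) a) ∧
    ksApply (ksApply lam a) b = ksApply (ksApply lam b) a := by
  have hGc := hG
  obtain ⟨hz, hm, hns⟩ := hG
  have hmono := mono_of hm
  rcases ha with ⟨ha1, hca⟩ | hca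
  · rcases hb with ⟨hb1, hcb⟩ | hcb
    · -- case 1 / case 1
      have hA := ks_eq1 hca
      have hB := ks_eq1 hcb
      have v1 : case1 lam a b = lam b := c1_out lam (by omega)
      have v2 : case1 lam a (b+1) = lam (b+1) := c1_out lam (by omega)
      have w1 : case1 lam b a = lam a - 2 := c1_in lam ha1 (by omega)
      have w2 : case1 lam b (a+1) = lam (a+1) - 2 := c1_in lam (by omega) (by omega)
      have hba : lam b ≤ lam (a+1) := hmono (a+1) b (by omega) (by omega)
      rw [hA, hB]
      refine ⟨Or.inl ⟨hb1, by omega⟩, Or.inl ⟨ha1, by omega⟩, ?_⟩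
      have hC : ksApply (case1 lam a) b = case1 (case1 lam a) b := ks_eq1 (by omega)
      have hD : ksApply (case1 lam b) a = case1 (case1 lam b) a := ks_eq1 (by omega)
      rw [hC, hD]
      funext j
      simp only [case1]
      split_ifs <;> omega
    · -- case 1 at a / case 2 at b
      obtain ⟨hbi, heqb, hrb1, hrb2, hlfb⟩ := case2_facts ε hGc hcb
      obtain ⟨-, bp1, bp2, bne1, ble, bne2⟩ := hcb.1
      have hlb := hlfb (by omega)
      have hA := ks_eq1 hca
      have hB := ks_eq2 (by omega : ¬ (lam (b+1) + 2 ≤ lam b))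
      have v1 : case1 lam a b = lam b := c1_out lam (by omega)
      have v2 : case1 lam a (b+1) = lam (b+1) := c1_out lam (by omega)
      have v3 : case1 lam a (b+2) = lam (b+2) := c1_out lam (by omega)
      have vm : (b = a+1 ∧ case1 lam a (b-1) = lam (b-1) - 2 ∧ lam (b-1) = lam a) ∨
          (a + 2 ≤ b ∧ case1 lam a (b-1) = lam (b-1)) := by
        rcases (by omega : b = a+1 ∨ a+2 ≤ b) with h | h
        · refine Or.inl ⟨h, c1_in lam (by omega) (by omega), ?_⟩
          rw [h, Nat.add_sub_cancel]
        · exact Or.inr ⟨h, c1_out lam (by omega)⟩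
      have w1 : case2 lam b a = lam a - 2 := c2_lt lam ha1 (by omega)
      have wm : (a+1 = b ∧ case2 lam b (a+1) = lam (a+1) - 1 ∧ lam (a+1) = lam b) ∨
          (a + 2 ≤ b ∧ case2 lam b (a+1) = lam (a+1) - 2 ∧ lam (b-1) ≤ lam (a+1)) := by
        rcases (by omega : a+1 = b ∨ a+2 ≤ b) with h | h
        · exact Or.inl ⟨h, c2_eq lam (by omega) (Or.inl h), by rw [h]⟩
        · exact Or.inr ⟨h, c2_lt lam (by omega) (by omega),
            hmono (a+1) (b-1) (by omega) (by omega)⟩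
      rw [hA, hB]
      refine ⟨Or.inr ⟨⟨hbi, by rw [v1]; exact bp1, by rw [v2]; exact bp2,
          by omega, by omega, by omega⟩, by omega⟩,
        Or.inl ⟨ha1, by omega⟩, ?_⟩
      have hC : ksApply (case1 lam a) b = case2 (case1 lam a) b := ks_eq2 (by omega)
      have hD : ksApply (case2 lam b) a = case1 (case2 lam b) a := ks_eq1 (by omega)
      rw [hC, hD]
      funext j
      simp only [case1, case2]
      split_ifs <;> omega
  · rcases hb with ⟨hb1, hcb⟩ | hcb
    · -- case 2 at a / case 1 at b
      obtain ⟨hai, heqa, hra1, hra2, hlfa⟩ := case2_facts ε hGc hca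
      obtain ⟨-, ap1, ap2, ane1, ale, ane2⟩ := hca.1
      have hma1 := hm (a+1) (by omega)
      have hA := ks_eq2 (by omega : ¬ (lam (a+1) + 2 ≤ lam a))
      have hB := ks_eq1 hcb
      have vm : (b = a+1 ∧ case2 lam a b = lam b - 1 ∧ lam b = lam (a+1) ∧
            case2 lam a (b+1) = lam (b+1) ∧ lam (b+1) = lam (a+2)) ∨
          (a+2 ≤ b ∧ case2 lam a b = lam b ∧ case2 lam a (b+1) = lam (b+1)) := by
        rcases (by omega : b = a+1 ∨ a+2 ≤ b) with h | h
        · subst h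
          exact Or.inl ⟨rfl, c2_eq lam hai (Or.inr rfl), rfl,
            c2_out lam (by omega) (by omega), rfl⟩
        · exact Or.inr ⟨h, c2_out lam (by omega) (by omega),
            c2_out lam (by omega) (by omega)⟩
      have w1 : case1 lam b a = lam a - 2 := c1_in lam hai (by omega)
      have w2 : case1 lam b (a+1) = lam (a+1) - 2 := c1_in lam (by omega) (by omega)
      have wm2 : (b = a+1 ∧ case1 lam b (a+2) = lam (a+2) ∧ lam (a+2) + 2 ≤ lam (a+1)) ∨
          (a+2 ≤ b ∧ case1 lam b (a+2) = lam (a+2) - 2 ∧ lam b ≤ lam (a+2)) := by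
        rcases (by omega : b = a+1 ∨ a+2 ≤ b) with h | h
        · refine Or.inl ⟨h, c1_out lam (by omega), ?_⟩
          rw [h] at hcb
          exact hcb
        · exact Or.inr ⟨h, c1_in lam (by omega) h, hmono (a+2) b (by omega) h⟩
      have h2a1 : 2 ≤ lam (a+1) := by omega
      have h2a : 2 ≤ lam a := by omega
      have wm0 : (a = 1 ∧ case1 lam b (a-1) = 0 ∧ lam (a-1) = 0) ∨
          (2 ≤ a ∧ case1 lam b (a-1) = lam (a-1) - 2 ∧ lam a < lam (a-1) ∧
            (lam (a-1) - lam a) % 2 = 1) := by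
        rcases (by omega : a = 1 ∨ 2 ≤ a) with h | h
        · subst h
          exact Or.inl ⟨rfl, (c1_out lam (by omega)).trans hz, hz⟩
        · have h' := hlfa h
          exact Or.inr ⟨h, c1_in lam (by omega) (by omega), h'.1, h'.2⟩
      rw [hA, hB]
      refine ⟨Or.inl ⟨by omega, by omega⟩,
        Or.inr ⟨⟨hai, by rw [w1, P_sub_two ε h2a]; exact ap1,
          by rw [w2, P_sub_two ε h2a1]; exact ap2,
          by omega, by omega, by omega⟩, by omega⟩, ?_⟩
      have hC : ksApply (case2 lam a) b = case1 (case2 lam a) b := ks_eq1 (by omega)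
      have hD : ksApply (case1 lam b) a = case2 (case1 lam b) a := ks_eq2 (by omega)
      rw [hC, hD]
      funext j
      simp only [case1, case2]
      split_ifs <;> omega
    · -- case 2 / case 2
      obtain ⟨hai, heqa, hra1, hra2, hlfa⟩ := case2_facts ε hGc hca
      obtain ⟨-, ap1, ap2, ane1, ale, ane2⟩ := hca.1
      obtain ⟨hbi, heqb, hrb1, hrb2, hlfb⟩ := case2_facts ε hGc hcb
      obtain ⟨-, bp1, bp2, bne1, ble, bne2⟩ := hcb.1
      have hlb := hlfb (by omega)
      have hma1 := hm (a+1) (by omega)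
      have hb3 : a + 3 ≤ b := by
        rcases (by omega : b = a+1 ∨ b = a+2 ∨ a+3 ≤ b) with h | h | h
        · exfalso
          rw [h] at heqb
          exact ane2 heqb
        · exfalso
          have e1 : lam (b-1) = lam (a+1) := by rw [h]; rfl
          have e2 : lam b = lam (a+2) := by rw [h]
          have hpar : lam (a+1) % 2 = lam b % 2 := P_mod_eq ε ap2 bp1
          have hmb : lam b ≤ lam (b-1) := by
            have h' := hm (b-1) (by omega)
            have nb : b - 1 + 1 = b := by omega
            rw [nb] at h'
            exact h'
          refine hns b ⟨hcb.1, Or.inl ?_⟩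
          rw [badL_iff]
          omega
        · exact h
      have hA := ks_eq2 (by omega : ¬ (lam (a+1) + 2 ≤ lam a))
      have hB := ks_eq2 (by omega : ¬ (lam (b+1) + 2 ≤ lam b))
      have v1 : case2 lam a (b-1) = lam (b-1) := c2_out lam (by omega) (by omega)
      have v2 : case2 lam a b = lam b := c2_out lam (by omega) (by omega)
      have v3 : case2 lam a (b+1) = lam (b+1) := c2_out lam (by omega) (by omega)
      have v4 : case2 lam a (b+2) = lam (b+2) := c2_out lam (by omega) (by omega)
      have w1 : case2 lam b a = lam a - 2 := c2_lt lam hai (by omega)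
      have w2 : case2 lam b (a+1) = lam (a+1) - 2 := c2_lt lam (by omega) (by omega)
      have w3 : case2 lam b (a+2) = lam (a+2) - 2 := c2_lt lam (by omega) (by omega)
      have hs1' : lam (b-1) ≤ lam (a+2) := hmono (a+2) (b-1) (by omega) (by omega)
      have h2a2 : 2 ≤ lam (a+2) := by omega
      have h2a1 : 3 ≤ lam (a+1) := by omega
      have h2a : 3 ≤ lam a := by omega
      have wm0 : (a = 1 ∧ case2 lam b (a-1) = 0 ∧ lam (a-1) = 0) ∨
          (2 ≤ a ∧ case2 lam b (a-1) = lam (a-1) - 2 ∧ lam a < lam (a-1)) := by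
        rcases (by omega : a = 1 ∨ 2 ≤ a) with h | h
        · subst h
          exact Or.inl ⟨rfl, (c2_out lam (by omega) (by omega)).trans hz, hz⟩
        · exact Or.inr ⟨h, c2_lt lam (by omega) (by omega), (hlfa h).1⟩
      rw [hA, hB]
      refine ⟨Or.inr ⟨⟨hbi, by rw [v2]; exact bp1, by rw [v3]; exact bp2,
          by omega, by omega, by omega⟩, by omega⟩,
        Or.inr ⟨⟨hai, by rw [w1, P_sub_two ε (by omega)]; exact ap1,
          by rw [w2, P_sub_two ε (by omega)]; exact ap2,
          by omega, by omega, by omega⟩, by omega⟩, ?_⟩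
      have hC : ksApply (case2 lam a) b = case2 (case2 lam a) b := ks_eq2 (by omega)
      have hD : ksApply (case2 lam b) a = case2 (case2 lam b) a := ks_eq2 (by omega)
      rw [hC, hD]
      funext j
      simp only [case2]
      split_ifs <;> omega

private lemma ks_comm (ε : ℤ) {lam : ℕ → ℕ} (hG : Good ε lam) {a b : ℕ}
    (hab : a ≠ b) (ha : Case1At lam a ∨ Case2At ε lam a)
    (hb : Case1At lam b ∨ Case2At ε lam b) :
    (Case1At (ksApply lam a) b ∨ Case2At ε (ksApply lam a) b) ∧
    (Case1At (ksApply lam b) a ∨ Case2At ε (ksApply lam b) a) ∧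
    ksApply (ksApply lam a) b = ksApply (ksApply lam b) a := by
  rcases Nat.lt_or_ge a b with h | h
  · exact comm_lt ε hG h ha hb
  · obtain ⟨x, y, e⟩ := comm_lt ε hG (by omega : b < a) hb ha
    exact ⟨y, x, e.symm⟩

private lemma adm_nil (ε : ℤ) (lam : ℕ → ℕ) : AdmissibleSeq ε lam [] := trivial

private lemma adm_cons {ε : ℤ} {lam : ℕ → ℕ} {i : ℕ} {t : List ℕ} :
    AdmissibleSeq ε lam (i :: t) ↔
      (Case1At lam i ∨ Case2At ε lam i) ∧ AdmissibleSeq ε (ksApply lam i) t :=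
  Iff.rfl

private lemma exists_maximal (ε : ℤ) :
    ∀ k : ℕ, ∀ lam : ℕ → ℕ, lam 1 ≤ k → Good ε lam →
    ∃ m : List ℕ, AdmissibleSeq ε lam m ∧ ∀ i, ¬ AdmissibleSeq ε lam (m ++ [i]) := by
  intro k
  induction k with
  | zero =>
    intro lam hk hG
    refine ⟨[], adm_nil ε lam, fun i hadm => ?_⟩
    have hs := (adm_cons.mp hadm).1
    have := step_pos ε hG hs
    omega
  | succ k ih =>
    intro lam hk hG
    by_cases h : ∃ i, Case1At lam i ∨ Case2At ε lam i
    · obtain ⟨i, hi⟩ := h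
      obtain ⟨m, hm1, hm2⟩ := ih (ksApply lam i)
        (by have := step_dec ε hG hi; omega) (good_step ε hG hi)
      exact ⟨i :: m, adm_cons.mpr ⟨hi, hm1⟩, fun j hadm => hm2 j (adm_cons.mp hadm).2⟩
    · exact ⟨[], adm_nil ε lam, fun i hadm => h ⟨i, (adm_cons.mp hadm).1⟩⟩

private lemma perm_of_maximal (ε : ℤ) :
    ∀ k : ℕ, ∀ lam : ℕ → ℕ, lam 1 ≤ k → Good ε lam →
    ∀ l₁ l₂ : List ℕ, AdmissibleSeq ε lam l₁ →
      (∀ i, ¬ AdmissibleSeq ε lam (l₁ ++ [i])) →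
      AdmissibleSeq ε lam l₂ →
      (∀ i, ¬ AdmissibleSeq ε lam (l₂ ++ [i])) → l₁.Perm l₂ := by
  intro k
  induction k with
  | zero =>
    intro lam hk hG l₁ l₂ h₁ h₁m h₂ h₂m
    have hnostep : ∀ i, ¬ (Case1At lam i ∨ Case2At ε lam i) := by
      intro i hs
      have := step_pos ε hG hs
      omega
    cases l₁ with
    | nil =>
      cases l₂ with
      | nil => exact List.Perm.refl _
      | cons b t => exact absurd (adm_cons.mp h₂).1 (hnostep b)
    | cons a t => exact absurd (adm_cons.mp h₁).1 (hnostep a)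
  | succ k ih =>
    intro lam hk hG l₁ l₂ h₁ h₁m h₂ h₂m
    cases l₁ with
    | nil =>
      cases l₂ with
      | nil => exact List.Perm.refl _
      | cons b t₂ =>
        have hsb := (adm_cons.mp h₂).1
        exact absurd (adm_cons.mpr ⟨hsb, adm_nil ε _⟩) (h₁m b)
    | cons a t₁ =>
      cases l₂ with
      | nil =>
        have hsa := (adm_cons.mp h₁).1
        exact absurd (adm_cons.mpr ⟨hsa, adm_nil ε _⟩) (h₂m a)
      | cons b t₂ =>
        obtain ⟨hsa, hta⟩ := adm_cons.mp h₁
        obtain ⟨hsb, htb⟩ := adm_cons.mp h₂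
        have hGa := good_step ε hG hsa
        have hda := step_dec ε hG hsa
        have h₁m' : ∀ i, ¬ AdmissibleSeq ε (ksApply lam a) (t₁ ++ [i]) :=
          fun i hadm => h₁m i (adm_cons.mpr ⟨hsa, hadm⟩)
        have h₂m' : ∀ i, ¬ AdmissibleSeq ε (ksApply lam b) (t₂ ++ [i]) :=
          fun i hadm => h₂m i (adm_cons.mpr ⟨hsb, hadm⟩)
        by_cases hab : a = b
        · subst hab
          exact List.Perm.cons a
            (ih (ksApply lam a) (by omega) hGa t₁ t₂ hta h₁m' htb h₂m')
        · obtain ⟨hb', ha', heqc⟩ := ks_comm ε hG hab hsa hsb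
          have hGb := good_step ε hG hsb
          have hdb := step_dec ε hG hsb
          have hGab := good_step ε hGa hb'
          obtain ⟨m, hmadm, hmmax⟩ := exists_maximal ε (ksApply (ksApply lam a) b 1)
            (ksApply (ksApply lam a) b) le_rfl hGab
          have p1 : t₁.Perm (b :: m) := by
            refine ih (ksApply lam a) (by omega) hGa t₁ (b :: m) hta h₁m'
              (adm_cons.mpr ⟨hb', hmadm⟩) ?_
            intro i hadm
            exact hmmax i (adm_cons.mp hadm).2
          have hmadm' : AdmissibleSeq ε (ksApply (ksApply lam b) a) m := heqc ▸ hmadm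
          have hmmax' : ∀ i, ¬ AdmissibleSeq ε (ksApply (ksApply lam b) a) (m ++ [i]) :=
            heqc ▸ hmmax
          have p2 : t₂.Perm (a :: m) := by
            refine ih (ksApply lam b) (by omega) hGb t₂ (a :: m) htb h₂m'
              (adm_cons.mpr ⟨ha', hmadm'⟩) ?_
            intro i hadm
            exact hmmax' i (adm_cons.mp hadm).2
          exact ((p1.cons a).trans (List.Perm.swap b a m)).trans ((p2.symm).cons b)

end KSAux2

/-- If `λ ∈ P_ε(N)` is non-singular, then any two maximal admissible sequences for
`λ` in the Kempken–Spaltenstein algorithm (admissible sequences that cannot be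
extended) have the same length and are conjugate under a permutation, i.e. they
agree after sorting in non-decreasing order. -/
theorem maximal_admissible_unique_of_nonsingular
    (ε : ℤ) (hε : ε = 1 ∨ ε = -1) (N n : ℕ)
    (lam : ℕ → ℕ) (hpart : IsPartitionEps ε N n lam)
    (hns : NonSingular ε lam)
    (l₁ l₂ : List ℕ)
    (h₁ : AdmissibleSeq ε lam l₁)
    (h₁max : ∀ i, ¬ AdmissibleSeq ε lam (l₁ ++ [i]))
    (h₂ : AdmissibleSeq ε lam l₂)
    (h₂max : ∀ i, ¬ AdmissibleSeq ε lam (l₂ ++ [i])) :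
    l₁.length = l₂.length ∧ l₁.Perm l₂ := by
  have hG : Good ε lam := ⟨hpart.1, hpart.2.2.2.1, hns⟩
  have hperm : l₁.Perm l₂ := perm_of_maximal ε (lam 1) lam le_rfl hG l₁ l₂ h₁ h₁max h₂ h₂max
  exact ⟨hperm.length_eq, hperm⟩
end
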